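/- arXiv:2202.02517 — 6 statements merged into one kernel-verified Lean document; each statement's English description precedes it below -/
import Mathlib

section
/- In any associative F-algebra with elements G_{i,j} satisfying G_{i,j} G_{k,ℓ} G_{s,t} + G_{s,t} G_{k,ℓ} G_{i,j} = δ_{j,ℓ} δ_{k,s} G_{i,t} + δ_{t,ℓ} δ_{k,i} G_{s,j}, one has G_{i,j} G_{k,ℓ} = 0 whenever i ≠ k and j ≠ ℓ. -/
theorem product_vanishes_distinct_rows_cols {F : Type*} [Field F] [CharZero F] {A : Type*}
    [NonUnitalRing A] [Module F A] [IsScalarTower F A A] [SMulCommClass F A A]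
    {I J : Type*} [DecidableEq I] [DecidableEq J] (G : I → J → A)
    (hrel : ∀ (i k s : I) (j l t : J),
      G i j * G k l * G s t + G s t * G k l * G i j =
        (if j = l ∧ k = s then G i t else 0) + (if t = l ∧ k = i then G s j else 0)) :
    ∀ (i k : I) (j l : J), i ≠ k → j ≠ l → G i j * G k l = 0 := by
  intro i k j l hik hjl
  have two_cancel : ∀ x : A, x + x = 0 → x = 0 := by
    intro x hx
    have h2 : (2 : F) • x = 0 := by rw [two_smul]; exact hx
    have hx' : x = (2 : F)⁻¹ • ((2 : F) • x) :=
      (inv_smul_smul₀ (by norm_num : (2 : F) ≠ 0) x).symm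
    rw [h2, smul_zero] at hx'
    exact hx'
  -- a c a = 0 where a = G i j, c = G k j
  have haca : G i j * G k j * G i j = 0 := by
    have h := hrel i k i j j j
    rw [if_neg (fun hc => hik hc.2.symm)] at h
    exact two_cancel _ (by simpa using h)
  -- a d a = 0 where d = G i l
  have hada : G i j * G i l * G i j = 0 := by
    have h := hrel i i i j l j
    rw [if_neg (fun hc => hjl hc.1)] at h
    exact two_cancel _ (by simpa using h)
  -- c a d + d a c = b where b = G k l
  have hb : G k j * G i j * G i l + G i l * G i j * G k j = G k l := by
    have h := hrel k i i j j l
    rw [if_pos ⟨rfl, rfl⟩, if_neg (fun hc => hjl hc.1.symm)] at h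
    simpa using h
  calc G i j * G k l
      = G i j * (G k j * G i j * G i l + G i l * G i j * G k j) := by rw [hb]
    _ = (G i j * G k j * G i j) * G i l + (G i j * G i l * G i j) * G k j := by
        noncomm_ring
    _ = 0 := by rw [haca, hada, zero_mul, zero_mul, add_zero]
end

section
/- In any associative F-algebra with elements G_{i,j} satisfying the relations G_{i,j} G_{k,ℓ} G_{s,t} + G_{s,t} G_{k,ℓ} G_{i,j} = δ_{j,ℓ} δ_{k,s} G_{i,t} + δ_{t,ℓ} δ_{k,i} G_{s,j}, one has G_{i,j} G_{i,ℓ} = G_{1,j} G_{1,ℓ} for all i ≠ 1 and j ≠ ℓ, and G_{i,j} G_{k,j} = G_{i,1} G_{k,1} for all i ≠ k and j ≠ 1. -/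
private lemma aux1 {A : Type*} [NonUnitalRing A] (a b c d : A)
    (R1 : a*b*c + c*b*a = d)
    (R2 : a*c*b + b*c*a = 0)
    (R3 : a*a*b + b*a*a = b)
    (R4 : a*a*c + c*a*a = 0) : a*d = b*c := by
  have h2 : a*c*b = -(b*c*a) := eq_neg_of_add_eq_zero_left R2
  have h3 : a*a*b = b - b*a*a := eq_sub_of_add_eq R3
  calc a*d = a*a*b*c + a*c*b*a := by rw [← R1]; noncomm_ring
    _ = (b - b*a*a)*c + (-(b*c*a))*a := by rw [h3, h2]
    _ = b*c - b*(a*a*c + c*a*a) := by noncomm_ring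
    _ = b*c := by rw [R4, mul_zero, sub_zero]

private lemma aux2 {A : Type*} [NonUnitalRing A] (a b c d : A)
    (R1 : c*b*a + a*b*c = d)
    (R2 : b*c*a + a*c*b = 0)
    (R3 : b*a*a + a*a*b = b)
    (R4 : c*a*a + a*a*c = 0) : d*a = c*b := by
  have h2 : b*c*a = -(a*c*b) := eq_neg_of_add_eq_zero_left R2
  have h3 : b*a*a = b - a*a*b := eq_sub_of_add_eq R3
  calc d*a = c*(b*a*a) + a*(b*c*a) := by rw [← R1]; noncomm_ring
    _ = c*(b - a*a*b) + a*(-(a*c*b)) := by rw [h3, h2]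
    _ = c*b - (c*a*a + a*a*c)*b := by noncomm_ring
    _ = c*b := by rw [R4, zero_mul, sub_zero]

theorem lemma_f3_f4 {F : Type*} [Field F] [CharZero F] {A : Type*}
    [NonUnitalRing A] [Module F A] [IsScalarTower F A A] [SMulCommClass F A A]
    {p q : ℕ} (hp : 1 < p) (hq : 1 < q) (G : ℕ → ℕ → A)
    (hrel : ∀ i ∈ Finset.Icc 1 p, ∀ k ∈ Finset.Icc 1 p, ∀ s ∈ Finset.Icc 1 p,
      ∀ j ∈ Finset.Icc 1 q, ∀ l ∈ Finset.Icc 1 q, ∀ t ∈ Finset.Icc 1 q,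
      G i j * G k l * G s t + G s t * G k l * G i j =
        (if j = l ∧ k = s then G i t else 0) + (if t = l ∧ k = i then G s j else 0)) :
    (∀ i ∈ Finset.Icc 2 p, ∀ j ∈ Finset.Icc 1 q, ∀ l ∈ Finset.Icc 1 q, j ≠ l →
        G i j * G i l = G 1 j * G 1 l) ∧
      (∀ i ∈ Finset.Icc 1 p, ∀ k ∈ Finset.Icc 1 p, i ≠ k → ∀ j ∈ Finset.Icc 2 q,
        G i j * G k j = G i 1 * G k 1) := by
  have h1p : (1 : ℕ) ∈ Finset.Icc 1 p := by simp; omega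
  have h1q : (1 : ℕ) ∈ Finset.Icc 1 q := by simp; omega
  constructor
  · -- Part 1: G i j * G i l = G 1 j * G 1 l  (i ≥ 2, j ≠ l)
    intro i hi j hj l hl hjl
    simp only [Finset.mem_Icc] at hi
    have hip : i ∈ Finset.Icc 1 p := by simp; omega
    have hi1 : ¬ (1 : ℕ) = i := by omega
    have hi1' : ¬ i = 1 := by omega
    have hlj : ¬ l = j := fun h => hjl h.symm
    have R1 := hrel 1 h1p i hip i hip j hj j hj l hl
    rw [if_pos ⟨rfl, rfl⟩, if_neg (fun h => hlj h.1), add_zero] at R1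
    have R2 := hrel 1 h1p i hip i hip j hj l hl j hj
    rw [if_neg (fun h => hjl h.1), if_neg (fun h => hjl h.1), add_zero] at R2
    have R3 := hrel 1 h1p 1 h1p i hip j hj j hj j hj
    rw [if_neg (fun h => hi1 h.2), if_pos ⟨rfl, rfl⟩, zero_add] at R3
    have R4 := hrel 1 h1p 1 h1p i hip j hj j hj l hl
    rw [if_neg (fun h => hi1 h.2), if_neg (fun h => hlj h.1), add_zero] at R4
    exact (aux1 (G 1 j) (G i j) (G i l) (G 1 l) R1 R2 R3 R4).symm
  · -- Part 2: G i j * G k j = G i 1 * G k 1  (i ≠ k, j ≥ 2)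
    intro i hi k hk hik j hj
    simp only [Finset.mem_Icc] at hj
    have hjq : j ∈ Finset.Icc 1 q := by simp; omega
    have hj1 : ¬ (1 : ℕ) = j := by omega
    have hj1' : ¬ j = 1 := by omega
    have hki : ¬ k = i := fun h => hik h.symm
    have R1 := hrel i hi k hk k hk j hjq j hjq 1 h1q
    rw [if_pos ⟨rfl, rfl⟩, if_neg (fun h => hj1 h.1), add_zero] at R1
    have R2 := hrel k hk i hi k hk j hjq j hjq 1 h1q
    rw [if_neg (fun h => hik h.2), if_neg (fun h => hj1 h.1), add_zero] at R2
    have R3 := hrel k hk k hk k hk j hjq 1 h1q 1 h1q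
    rw [if_neg (fun h => hj1' h.1), if_pos ⟨rfl, rfl⟩, zero_add] at R3
    have R4 := hrel i hi k hk k hk j hjq 1 h1q 1 h1q
    rw [if_neg (fun h => hj1' h.1), if_neg (fun h => hki h.2), add_zero] at R4
    exact (aux2 (G k 1) (G k j) (G i j) (G i 1) R1 R2 R3 R4).symm
end

section
/- In any associative F-algebra with elements G_{i,j} satisfying the matrix-unit triple relations, G_{1,j} G_{1,ℓ} G_{1,s} = 0 whenever j, ℓ, s are pairwise distinct indices in {1,…,q}, and G_{i,1} G_{k,1} G_{t,1} = 0 whenever i, k, t are pairwise distinct indices in {1,…,p}. -/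
private lemma aux3 {A : Type*} [NonUnitalRing A] (X Y Z Hb Hc : A)
    (h1 : X*Y*Z + Z*Y*X = 0)
    (h2 : Hb*Hc*Z + Z*Hc*Hb = Y)
    (h3 : Z*Hb*Hc + Hc*Hb*Z = 0)
    (h4 : X*Z*Z + Z*Z*X = X)
    (h5 : X*Hb*Hc + Hc*Hb*X = 0)
    (h6 : X*Hc*Hc + Hc*Hc*X = 0)
    (h7 : Y*Hc*Hc + Hc*Hc*Y = 0)
    (h8 : X*Y*Hc + Hc*Y*X = 0)
    (h9 : X*Hc*Z + Z*Hc*X = 0)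
    (h10 : Y*Z*Hc + Hc*Z*Y = Hb) :
    X*Y*Z = 0 := by
  have key : Hc*Hb*X = 0 := by
    linear_combination (norm := noncomm_ring) Hc*Hc*h1 - h6*(Y*Z) + X*h7*Z + Hc*Y*h9
      - Hc*h10*X - h8*(Hc*Z)
  linear_combination (norm := noncomm_ring) (-(X*h2*Z)) + X*Z*h3 - h4*(Hb*Hc)
    + (h5-key)*(Z*Z) - (h5-key) + Z*Z*(h5-key)

private lemma part1 {A : Type*} [NonUnitalRing A] {p q : ℕ} (hp : 1 < p) (hq : 1 < q)
    (G : ℕ → ℕ → A)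
    (hrel : ∀ i ∈ Finset.Icc 1 p, ∀ k ∈ Finset.Icc 1 p, ∀ s ∈ Finset.Icc 1 p,
      ∀ j ∈ Finset.Icc 1 q, ∀ l ∈ Finset.Icc 1 q, ∀ t ∈ Finset.Icc 1 q,
      G i j * G k l * G s t + G s t * G k l * G i j =
        (if j = l ∧ k = s then G i t else 0) + (if t = l ∧ k = i then G s j else 0)) :
    ∀ j ∈ Finset.Icc 1 q, ∀ l ∈ Finset.Icc 1 q, ∀ s ∈ Finset.Icc 1 q,
        j ≠ l → l ≠ s → j ≠ s → G 1 j * G 1 l * G 1 s = 0 := by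
  intro a ha b hb c hc hab hbc hac
  have m1 : 1 ∈ Finset.Icc 1 p := Finset.mem_Icc.mpr ⟨le_refl 1, hp.le⟩
  have m2 : 2 ∈ Finset.Icc 1 p := Finset.mem_Icc.mpr ⟨one_le_two, hp⟩
  have h1 := hrel 1 m1 1 m1 1 m1 a ha b hb c hc
  have h2 := hrel 2 m2 2 m2 1 m1 b hb c hc c hc
  have h3 := hrel 1 m1 2 m2 2 m2 c hc b hb c hc
  have h4 := hrel 1 m1 1 m1 1 m1 a ha c hc c hc
  have h5 := hrel 1 m1 2 m2 2 m2 a ha b hb c hc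
  have h6 := hrel 1 m1 2 m2 2 m2 a ha c hc c hc
  have h7 := hrel 1 m1 2 m2 2 m2 b hb c hc c hc
  have h8 := hrel 1 m1 1 m1 2 m2 a ha b hb c hc
  have h9 := hrel 1 m1 2 m2 1 m1 a ha c hc c hc
  have h10 := hrel 1 m1 1 m1 2 m2 b hb c hc c hc
  simp only [hab, hbc, hac, Ne.symm hab, Ne.symm hbc, Ne.symm hac,
    and_true, and_false, false_and, true_and, if_true, if_false,
    ite_false, ite_true, eq_self_iff_true,
    show ((2:ℕ) = 1) = False by simp, show ((1:ℕ) = 2) = False by simp,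
    add_zero, zero_add] at h1 h2 h3 h4 h5 h6 h7 h8 h9 h10
  exact aux3 (G 1 a) (G 1 b) (G 1 c) (G 2 b) (G 2 c) h1 h2 h3 h4 h5 h6 h7 h8 h9 h10

theorem lemma_f5_f6 {F : Type*} [Field F] [CharZero F] {A : Type*}
    [NonUnitalRing A] [Module F A] [IsScalarTower F A A] [SMulCommClass F A A]
    {p q : ℕ} (hp : 1 < p) (hq : 1 < q) (G : ℕ → ℕ → A)
    (hrel : ∀ i ∈ Finset.Icc 1 p, ∀ k ∈ Finset.Icc 1 p, ∀ s ∈ Finset.Icc 1 p,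
      ∀ j ∈ Finset.Icc 1 q, ∀ l ∈ Finset.Icc 1 q, ∀ t ∈ Finset.Icc 1 q,
      G i j * G k l * G s t + G s t * G k l * G i j =
        (if j = l ∧ k = s then G i t else 0) + (if t = l ∧ k = i then G s j else 0)) :
    (∀ j ∈ Finset.Icc 1 q, ∀ l ∈ Finset.Icc 1 q, ∀ s ∈ Finset.Icc 1 q,
        j ≠ l → l ≠ s → j ≠ s → G 1 j * G 1 l * G 1 s = 0) ∧
      (∀ i ∈ Finset.Icc 1 p, ∀ k ∈ Finset.Icc 1 p, ∀ t ∈ Finset.Icc 1 p,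
        i ≠ k → k ≠ t → i ≠ t → G i 1 * G k 1 * G t 1 = 0) := by
  constructor
  · exact part1 hp hq G hrel
  · have hrel' : ∀ i ∈ Finset.Icc 1 q, ∀ k ∈ Finset.Icc 1 q, ∀ s ∈ Finset.Icc 1 q,
        ∀ j ∈ Finset.Icc 1 p, ∀ l ∈ Finset.Icc 1 p, ∀ t ∈ Finset.Icc 1 p,
        G j i * G l k * G t s + G t s * G l k * G j i =
          (if j = l ∧ k = s then G t i else 0) + (if t = l ∧ k = i then G j s else 0) := by
      intro i hi k hk s hs j hj l hl t ht
      have h := hrel j hj l hl t ht i hi k hk s hs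
      rw [h, add_comm]
      congr 1
      · apply if_congr _ rfl rfl
        constructor <;> rintro ⟨u, v⟩ <;> exact ⟨v.symm, u.symm⟩
      · apply if_congr _ rfl rfl
        constructor <;> rintro ⟨u, v⟩ <;> exact ⟨v.symm, u.symm⟩
    exact part1 hq hp (fun i j => G j i) hrel'
end

section
/- In any associative F-algebra with elements G_{i,j} satisfying the matrix-unit triple relations, for all i ∈ {2,…,p} and j ∈ {2,…,q} one has G_{1,1} G_{i,1} G_{i,1} = G_{1,j} G_{1,j} G_{1,1} and G_{i,1} G_{i,1} G_{1,1} = G_{1,1} G_{1,j} G_{1,j}. In particular these products are independent of the choice of i ≥ 2 and j ≥ 2. -/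
theorem lemma_f7_f8 {F : Type*} [Field F] [CharZero F] {A : Type*}
    [NonUnitalRing A] [Module F A] [IsScalarTower F A A] [SMulCommClass F A A]
    {p q : ℕ} (hp : 1 < p) (hq : 1 < q) (G : ℕ → ℕ → A)
    (hrel : ∀ i ∈ Finset.Icc 1 p, ∀ k ∈ Finset.Icc 1 p, ∀ s ∈ Finset.Icc 1 p,
      ∀ j ∈ Finset.Icc 1 q, ∀ l ∈ Finset.Icc 1 q, ∀ t ∈ Finset.Icc 1 q,
      G i j * G k l * G s t + G s t * G k l * G i j =
        (if j = l ∧ k = s then G i t else 0) + (if t = l ∧ k = i then G s j else 0)) :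
    ∀ i ∈ Finset.Icc 2 p, ∀ j ∈ Finset.Icc 2 q,
      G 1 1 * G i 1 * G i 1 = G 1 j * G 1 j * G 1 1 ∧
        G i 1 * G i 1 * G 1 1 = G 1 1 * G 1 j * G 1 j := by
  intro i hi j hj
  simp only [Finset.mem_Icc] at hi hj
  have hip : i ∈ Finset.Icc 1 p := Finset.mem_Icc.2 ⟨by omega, hi.2⟩
  have hjq : j ∈ Finset.Icc 1 q := Finset.mem_Icc.2 ⟨by omega, hj.2⟩
  have h1p : (1 : ℕ) ∈ Finset.Icc 1 p := Finset.mem_Icc.2 ⟨le_refl 1, by omega⟩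
  have h1q : (1 : ℕ) ∈ Finset.Icc 1 q := Finset.mem_Icc.2 ⟨le_refl 1, by omega⟩
  have hine : i ≠ 1 := by omega
  have hjne : j ≠ 1 := by omega
  -- E1 : e*a*a + a*a*e = e
  have E1 := hrel 1 h1p i hip i hip 1 h1q 1 h1q 1 h1q
  simp only [hine, hjne, Ne.symm hine, Ne.symm hjne, and_true, and_false, true_and,
    false_and, and_self, if_true, if_false, add_zero, zero_add] at E1
  -- E2 : b*b*e + e*b*b = e
  have E2 := hrel 1 h1p 1 h1p 1 h1p j hjq j hjq 1 h1q
  simp only [hine, hjne, Ne.symm hine, Ne.symm hjne, and_true, and_false, true_and,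
    false_and, and_self, if_true, if_false, add_zero, zero_add] at E2
  -- E5 : a*b*e + e*b*a = 0
  have E5 := hrel i hip 1 h1p 1 h1p 1 h1q j hjq 1 h1q
  simp only [hine, hjne, Ne.symm hine, Ne.symm hjne, and_true, and_false, true_and,
    false_and, and_self, if_true, if_false, add_zero, zero_add] at E5
  -- E6 : b*a*e + e*a*b = 0
  have E6 := hrel 1 h1p i hip 1 h1p j hjq 1 h1q 1 h1q
  simp only [hine, hjne, Ne.symm hine, Ne.symm hjne, and_true, and_false, true_and,
    false_and, and_self, if_true, if_false, add_zero, zero_add] at E6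
  -- E7 : a*a*b + b*a*a = 0
  have E7 := hrel i hip i hip 1 h1p 1 h1q 1 h1q j hjq
  simp only [hine, hjne, Ne.symm hine, Ne.symm hjne, and_true, and_false, true_and,
    false_and, and_self, if_true, if_false, add_zero, zero_add] at E7
  -- E8 : b*b*a + a*b*b = 0
  have E8 := hrel 1 h1p 1 h1p i hip j hjq j hjq 1 h1q
  simp only [hine, hjne, Ne.symm hine, Ne.symm hjne, and_true, and_false, true_and,
    false_and, and_self, if_true, if_false, add_zero, zero_add] at E8
  -- E4 : a*e*b + b*e*a = u
  have E4 := hrel i hip 1 h1p 1 h1p 1 h1q 1 h1q j hjq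
  simp only [hine, hjne, Ne.symm hine, Ne.symm hjne, and_true, and_false, true_and,
    false_and, and_self, if_true, if_false, add_zero, zero_add] at E4
  -- E9 : a*u*b + b*u*a = e
  have E9 := hrel i hip i hip 1 h1p 1 h1q j hjq j hjq
  simp only [hine, hjne, Ne.symm hine, Ne.symm hjne, and_true, and_false, true_and,
    false_and, and_self, if_true, if_false, add_zero, zero_add] at E9
  -- key : e*a*a + e*(b*b) = e
  have key : G 1 1 * G i 1 * G i 1 + G 1 1 * (G 1 j * G 1 j) = G 1 1 := by
    linear_combination (norm := noncomm_ring)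
      -(E1 * (G 1 j * G 1 j)) - E2 * (G i 1 * G i 1) + E9
        + G i 1 * E4 * G 1 j + G 1 j * E4 * G i 1
        - E5 * (G i 1 * G 1 j) + (G 1 1 * G 1 j) * E7
        - E6 * (G 1 j * G i 1) + (G 1 1 * G i 1) * E8
  constructor
  · linear_combination (norm := noncomm_ring) key - E2
  · linear_combination (norm := noncomm_ring) E1 - key
end

section
/- In any associative F-algebra with elements G_{i,j} satisfying the matrix-unit triple relations, for j, ℓ ∈ {2,…,q} one has G_{1,ℓ} G_{1,1} G_{1,1} G_{1,j} = −δ_{ℓ,j} G_{1,1} G_{1,1} G_{1,j} G_{1,j} + G_{1,ℓ} G_{1,j}, and for j ∈ {2,…,q}: G_{1,1} G_{1,1} G_{1,j} G_{1,j} G_{1,1} = G_{1,j} G_{1,j} G_{1,1}. -/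
private lemma double_zero {F : Type*} [Field F] [CharZero F] {A : Type*} [NonUnitalRing A]
    [Module F A] (x : A) (h : x + x = 0) : x = 0 := by
  have h2 : (2:F) • x = 0 := (two_smul F x).trans h
  calc x = (1:F) • x := (one_smul F x).symm
    _ = ((2:F)⁻¹ * 2) • x := by norm_num
    _ = (2:F)⁻¹ • ((2:F) • x) := mul_smul _ _ _
    _ = 0 := by rw [h2, smul_zero]

private lemma key_calc {F : Type*} [Field F] [CharZero F] {A : Type*} [NonUnitalRing A]
    [Module F A] (a xj xl y yj : A)
    (h1 : a*y*yj + yj*y*a = xj)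
    (h2 : a*xl*a + a*xl*a = 0)
    (h3 : a*a*yj + yj*a*a = 0)
    (h4 : a*a*xl + xl*a*a = xl)
    (h5 : a*a*a + a*a*a = a + a)
    (h6 : a*a*y + y*a*a = y)
    (h7 : a*xl*yj + yj*xl*a = 0)
    (h8 : a*xj*xl + xl*xj*a = 0)
    (h9 : a*a*xj + xj*a*a = xj) :
    xl*a*a*xj = xl*xj := by
  have big : (xl*a*a*xj - xl*xj) + (xl*a*a*xj - xl*xj) =
      -(a * (a*y*yj + yj*y*a - xj) * (xl*a)) - a * (a*y*yj + yj*y*a - xj) * (xl*a)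
      + (a*yj*y) * (a*xl*a + a*xl*a)
      - y * (a*a*yj + yj*a*a) * (xl*a) - y * (a*a*yj + yj*a*a) * (xl*a)
      + (y*yj) * (a*a*xl + xl*a*a - xl) * a + (y*yj) * (a*a*xl + xl*a*a - xl) * a
      - (y*yj*xl) * (a*a*a + a*a*a - (a + a)) - (y*yj*xl) * (a*a*a + a*a*a - (a + a))
      + (a*a*y + y*a*a - y) * (yj*(xl*a)) + (a*a*y + y*a*a - y) * (yj*(xl*a))
      + y * (a*xl*yj + yj*xl*a) * (a*a) + y * (a*xl*yj + yj*xl*a) * (a*a)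
      - (y*a*xl) * (a*a*yj + yj*a*a) - (y*a*xl) * (a*a*yj + yj*a*a)
      + (y*a) * (a*a*xl + xl*a*a - xl) * yj + (y*a) * (a*a*xl + xl*a*a - xl) * yj
      - y * (a*a*a + a*a*a - (a + a)) * (xl*yj)
      - (a*xj*xl + xl*xj*a) * a - (a*xj*xl + xl*xj*a) * a
      + xl * (a*a*xj + xj*a*a - xj) + xl * (a*a*xj + xj*a*a - xj) := by
    simp only [mul_add, add_mul, mul_sub, sub_mul, mul_assoc]
    abel
  rw [sub_eq_zero_of_eq h1, sub_eq_zero_of_eq h4, sub_eq_zero_of_eq h5,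
    sub_eq_zero_of_eq h6, sub_eq_zero_of_eq h9, h2, h3, h7, h8] at big
  simp only [mul_zero, zero_mul, neg_zero, add_zero, zero_add, sub_zero, zero_sub,
    neg_neg, sub_self, add_neg_cancel, neg_add_cancel] at big
  have hz : xl*a*a*xj - xl*xj = 0 := by
    apply double_zero (F := F)
    rw [big]
  exact sub_eq_zero.mp hz

private lemma easy1 {A : Type*} [NonUnitalRing A] (a xj : A)
    (h9 : a*a*xj + xj*a*a = xj) : xj*a*a*xj = -(a*a*xj*xj) + xj*xj := by
  have e := congrArg (· * xj) h9
  simp only [add_mul] at e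
  rw [← e]
  abel

private lemma easy2 {F : Type*} [Field F] [CharZero F] {A : Type*} [NonUnitalRing A]
    [Module F A] (a xj : A)
    (h9 : a*a*xj + xj*a*a = xj)
    (h10 : a*xj*a + a*xj*a = 0) :
    a*a*xj*xj*a = xj*xj*a := by
  have big : (a*a*xj*xj*a - xj*xj*a) + (a*a*xj*xj*a - xj*xj*a) =
      (a*a*xj + xj*a*a - xj) * (xj*a) + (a*a*xj + xj*a*a - xj) * (xj*a)
      - (xj*a) * (a*xj*a + a*xj*a) := by
    simp only [mul_add, add_mul, mul_sub, sub_mul, mul_assoc]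
    abel
  rw [sub_eq_zero_of_eq h9, h10] at big
  simp only [mul_zero, zero_mul, add_zero, sub_zero] at big
  have hz : a*a*xj*xj*a - xj*xj*a = 0 := by
    apply double_zero (F := F)
    rw [big]
  exact sub_eq_zero.mp hz

theorem corollary_t1_t4 {F : Type*} [Field F] [CharZero F] {A : Type*}
    [NonUnitalRing A] [Module F A] [IsScalarTower F A A] [SMulCommClass F A A]
    {p q : ℕ} (hp : 1 < p) (hq : 1 < q) (G : ℕ → ℕ → A)
    (hrel : ∀ i ∈ Finset.Icc 1 p, ∀ k ∈ Finset.Icc 1 p, ∀ s ∈ Finset.Icc 1 p,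
      ∀ j ∈ Finset.Icc 1 q, ∀ l ∈ Finset.Icc 1 q, ∀ t ∈ Finset.Icc 1 q,
      G i j * G k l * G s t + G s t * G k l * G i j =
        (if j = l ∧ k = s then G i t else 0) + (if t = l ∧ k = i then G s j else 0)) :
    (∀ j ∈ Finset.Icc 2 q, ∀ l ∈ Finset.Icc 2 q,
        G 1 l * G 1 1 * G 1 1 * G 1 j =
          -(if l = j then G 1 1 * G 1 1 * G 1 j * G 1 j else 0) + G 1 l * G 1 j) ∧
      (∀ j ∈ Finset.Icc 2 q,
        G 1 1 * G 1 1 * G 1 j * G 1 j * G 1 1 = G 1 j * G 1 j * G 1 1) := by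
  have h1p : 1 ∈ Finset.Icc 1 p := Finset.mem_Icc.mpr ⟨le_refl 1, by omega⟩
  have h2p : 2 ∈ Finset.Icc 1 p := Finset.mem_Icc.mpr ⟨by omega, by omega⟩
  have h1q : 1 ∈ Finset.Icc 1 q := Finset.mem_Icc.mpr ⟨le_refl 1, by omega⟩
  constructor
  · intro j hj l hl
    rw [Finset.mem_Icc] at hj hl
    have hjq : j ∈ Finset.Icc 1 q := Finset.mem_Icc.mpr ⟨by omega, hj.2⟩
    have hlq : l ∈ Finset.Icc 1 q := Finset.mem_Icc.mpr ⟨by omega, hl.2⟩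
    have hj1 : j ≠ 1 := by omega
    have hl1 : l ≠ 1 := by omega
    have h9 : G 1 1 * G 1 1 * G 1 j + G 1 j * G 1 1 * G 1 1 = G 1 j := by
      have := hrel 1 h1p 1 h1p 1 h1p 1 h1q 1 h1q j hjq
      simpa [hj1] using this
    rcases eq_or_ne l j with hlj | hlj
    · subst hlj
      rw [if_pos rfl]
      exact easy1 (G 1 1) (G 1 l) h9
    · rw [if_neg hlj, neg_zero, zero_add]
      have h1 : G 1 1 * G 2 1 * G 2 j + G 2 j * G 2 1 * G 1 1 = G 1 j := by
        have := hrel 1 h1p 2 h2p 2 h2p 1 h1q 1 h1q j hjq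
        simpa [hj1] using this
      have h2 : G 1 1 * G 1 l * G 1 1 + G 1 1 * G 1 l * G 1 1 = 0 := by
        have := hrel 1 h1p 1 h1p 1 h1p 1 h1q l hlq 1 h1q
        simpa [hl1, Ne.symm hl1] using this
      have h3 : G 1 1 * G 1 1 * G 2 j + G 2 j * G 1 1 * G 1 1 = 0 := by
        have := hrel 1 h1p 1 h1p 2 h2p 1 h1q 1 h1q j hjq
        simpa [hj1] using this
      have h4 : G 1 1 * G 1 1 * G 1 l + G 1 l * G 1 1 * G 1 1 = G 1 l := by
        have := hrel 1 h1p 1 h1p 1 h1p 1 h1q 1 h1q l hlq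
        simpa [hl1] using this
      have h5 : G 1 1 * G 1 1 * G 1 1 + G 1 1 * G 1 1 * G 1 1 = G 1 1 + G 1 1 := by
        have := hrel 1 h1p 1 h1p 1 h1p 1 h1q 1 h1q 1 h1q
        simpa using this
      have h6 : G 1 1 * G 1 1 * G 2 1 + G 2 1 * G 1 1 * G 1 1 = G 2 1 := by
        have := hrel 1 h1p 1 h1p 2 h2p 1 h1q 1 h1q 1 h1q
        simpa using this
      have h7 : G 1 1 * G 1 l * G 2 j + G 2 j * G 1 l * G 1 1 = 0 := by
        have := hrel 1 h1p 1 h1p 2 h2p 1 h1q l hlq j hjq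
        simpa [hl1, Ne.symm hl1, hlj, Ne.symm hlj] using this
      have h8 : G 1 1 * G 1 j * G 1 l + G 1 l * G 1 j * G 1 1 = 0 := by
        have := hrel 1 h1p 1 h1p 1 h1p 1 h1q j hjq l hlq
        simpa [hj1, Ne.symm hj1, hlj, Ne.symm hlj] using this
      exact key_calc (F := F) (G 1 1) (G 1 j) (G 1 l) (G 2 1) (G 2 j)
        h1 h2 h3 h4 h5 h6 h7 h8 h9
  · intro j hj
    rw [Finset.mem_Icc] at hj
    have hjq : j ∈ Finset.Icc 1 q := Finset.mem_Icc.mpr ⟨by omega, hj.2⟩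
    have hj1 : j ≠ 1 := by omega
    have h9 : G 1 1 * G 1 1 * G 1 j + G 1 j * G 1 1 * G 1 1 = G 1 j := by
      have := hrel 1 h1p 1 h1p 1 h1p 1 h1q 1 h1q j hjq
      simpa [hj1] using this
    have h10 : G 1 1 * G 1 j * G 1 1 + G 1 1 * G 1 j * G 1 1 = 0 := by
      have := hrel 1 h1p 1 h1p 1 h1p 1 h1q j hjq 1 h1q
      simpa [hj1, Ne.symm hj1] using this
    exact easy2 (F := F) (G 1 1) (G 1 j) h9 h10
end

section
/- With the elements A_{i,k} defined from the G_{i,j} as in the proof of the main theorem (satisfying A_{i,k} A_{ℓ,t} = δ_{k,ℓ} A_{i,t}), every generator can be recovered as G_{i,j} = A_{i,j+p} + A_{j+p,i} for all 1 ≤ i ≤ p, 1 ≤ j ≤ q. Consequently, the subalgebra generated by the G_{i,j} is spanned by the A_{i,k}. -/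
set_option linter.unusedSectionVars false

namespace TripleMU

open Finset

variable {A : Type*} [NonUnitalRing A] {p q : ℕ} {G : ℕ → ℕ → A}

/-- The triple matrix-unit relation. -/
def Rel (p q : ℕ) (G : ℕ → ℕ → A) : Prop :=
  ∀ i ∈ Finset.Icc 1 p, ∀ k ∈ Finset.Icc 1 p, ∀ s ∈ Finset.Icc 1 p,
    ∀ j ∈ Finset.Icc 1 q, ∀ l ∈ Finset.Icc 1 q, ∀ t ∈ Finset.Icc 1 q,
    G i j * G k l * G s t + G s t * G k l * G i j =
      (if j = l ∧ k = s then G i t else 0) + (if t = l ∧ k = i then G s j else 0)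

lemma memIcc {n x : ℕ} (h1 : 1 ≤ x) (h2 : x ≤ n) : x ∈ Finset.Icc 1 n :=
  Finset.mem_Icc.mpr ⟨h1, h2⟩

section
variable (hrel : Rel p q G) (half : ∀ x y : A, x + x = y + y → x = y)
include hrel half

/-- cube: `G i j ^ 3 = G i j`. -/
lemma cube {i j : ℕ} (hi : i ∈ Icc 1 p) (hj : j ∈ Icc 1 q) :
    G i j * G i j * G i j = G i j := by
  have h := hrel i hi i hi i hi j hj j hj j hj
  simp only [and_self, if_pos rfl] at h
  exact half _ _ h

/-- sandwich with distinct middle is zero. -/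
lemma sand0 {i a j c : ℕ} (hi : i ∈ Icc 1 p) (ha : a ∈ Icc 1 p) (hj : j ∈ Icc 1 q)
    (hc : c ∈ Icc 1 q) (hn : ¬(j = c ∧ a = i)) :
    G i j * G a c * G i j = 0 := by
  have h := hrel i hi a ha i hi j hj c hc j hj
  simp only [if_neg hn] at h
  exact half _ _ (by simpa using h)

lemma D1 {i a j c : ℕ} (hi : i ∈ Icc 1 p) (ha : a ∈ Icc 1 p) (hj : j ∈ Icc 1 q)
    (hc : c ∈ Icc 1 q) (hia : i ≠ a) (hjc : j ≠ c) :
    G i j * G a c = 0 := by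
  have z1 : G i j * G a c * G a c + G a c * G a c * G i j = 0 := by
    have h := hrel i hi a ha a ha j hj c hc c hc
    rw [if_neg (fun hx => hjc hx.1), if_neg (fun hx => hia hx.2.symm), add_zero] at h
    exact h
  have s1 : G a c * G i j * G a c = 0 :=
    sand0 hrel half ha hi hc hj (fun hx => hjc hx.1.symm)
  have c1 : G a c * G a c * G a c = G a c := cube hrel half ha hc
  have key : G i j * G a c =
      (G i j * G a c * G a c + G a c * G a c * G i j) * G a c
      - G a c * (G a c * G i j * G a c)
      - (G i j * (G a c * G a c * G a c) - G i j * G a c) := by noncomm_ring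
  rw [z1, s1, c1] at key
  simpa using key

lemma D2 {i a j : ℕ} (hi : i ∈ Icc 1 p) (ha : a ∈ Icc 1 p) (hj : j ∈ Icc 1 q)
    (hia : i ≠ a) : G i j * G a j = G i 1 * G a 1 := by
  by_cases hj1 : j = 1
  · subst hj1; rfl
  have h1q : (1 : ℕ) ∈ Icc 1 q :=
    memIcc le_rfl ((Finset.mem_Icc.mp hj).1.trans (Finset.mem_Icc.mp hj).2)
  have z1 : G a j * G a 1 * G a 1 + G a 1 * G a 1 * G a j = G a j := by
    have h := hrel a ha a ha a ha j hj 1 h1q 1 h1q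
    rw [if_neg (fun hx => hj1 hx.1), if_pos ⟨rfl, rfl⟩, zero_add] at h
    exact h
  have z2 : G i j * G a j * G a 1 + G a 1 * G a j * G i j = G i 1 := by
    have h := hrel i hi a ha a ha j hj j hj 1 h1q
    rw [if_pos ⟨rfl, rfl⟩, if_neg (fun hx => hj1 hx.1.symm), add_zero] at h
    exact h
  have z3 : G i j * G a 1 = 0 := D1 hrel half hi ha hj h1q hia hj1
  have key : G i j * G a j - G i 1 * G a 1 =
      -(G i j * (G a j * G a 1 * G a 1 + G a 1 * G a 1 * G a j - G a j))
      + (G i j * G a j * G a 1 + G a 1 * G a j * G i j - G i 1) * G a 1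
      - (G a 1 * G a j) * (G i j * G a 1) + (G i j * G a 1) * (G a 1 * G a j) := by
    noncomm_ring
  rw [sub_eq_zero_of_eq z1, sub_eq_zero_of_eq z2, z3] at key
  simp only [mul_zero, zero_mul, neg_zero, zero_add, add_zero, sub_zero, zero_sub,
    neg_neg] at key
  exact sub_eq_zero.mp (by simpa using key)

lemma D3 {i j c : ℕ} (hi : i ∈ Icc 1 p) (hj : j ∈ Icc 1 q) (hc : c ∈ Icc 1 q)
    (hjc : j ≠ c) : G i j * G i c = G 1 j * G 1 c := by
  by_cases hi1 : i = 1
  · subst hi1; rfl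
  have h1p : (1 : ℕ) ∈ Icc 1 p :=
    memIcc le_rfl ((Finset.mem_Icc.mp hi).1.trans (Finset.mem_Icc.mp hi).2)
  have z1 : G i c * G 1 c * G 1 c + G 1 c * G 1 c * G i c = G i c := by
    have h := hrel i hi 1 h1p 1 h1p c hc c hc c hc
    rw [if_pos ⟨rfl, rfl⟩, if_neg (fun hx => hi1 hx.2.symm), add_zero] at h
    exact h
  have z2 : G i j * G i c * G 1 c + G 1 c * G i c * G i j = G 1 j := by
    have h := hrel i hi i hi 1 h1p j hj c hc c hc
    rw [if_neg (fun hx => hjc hx.1), if_pos ⟨rfl, rfl⟩, zero_add] at h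
    exact h
  have z3 : G i j * G 1 c = 0 := D1 hrel half hi h1p hj hc hi1 hjc
  have key : G i j * G i c - G 1 j * G 1 c =
      -(G i j * (G i c * G 1 c * G 1 c + G 1 c * G 1 c * G i c - G i c))
      + (G i j * G i c * G 1 c + G 1 c * G i c * G i j - G 1 j) * G 1 c
      - (G 1 c * G i c) * (G i j * G 1 c) + (G i j * G 1 c) * (G 1 c * G i c) := by
    noncomm_ring
  rw [sub_eq_zero_of_eq z1, sub_eq_zero_of_eq z2, z3] at key
  simp only [mul_zero, zero_mul, neg_zero, zero_add, add_zero, sub_zero, zero_sub,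
    neg_neg] at key
  exact sub_eq_zero.mp (by simpa using key)

end

section
variable (hrel : Rel p q G) (half : ∀ x y : A, x + x = y + y → x = y)
  (hp2 : 2 ≤ p) (hq2 : 2 ≤ q)
include hrel half hp2 hq2

lemma W1 {i a b : ℕ} (hi : i ∈ Icc 1 p) (ha : a ∈ Icc 1 p) (hb : b ∈ Icc 1 p)
    (hia : i ≠ a) (hab : a ≠ b) : G i 1 * G a 1 * G b 1 = 0 := by
  have h1q : (1 : ℕ) ∈ Icc 1 q := memIcc le_rfl (by omega)
  have h2q : (2 : ℕ) ∈ Icc 1 q := memIcc (by omega) hq2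
  have z1 : G i 1 * G a 1 - G i 2 * G a 2 = 0 :=
    sub_eq_zero_of_eq (D2 hrel half hi ha h2q hia).symm
  have z2 : G a 2 * G b 1 = 0 := D1 hrel half ha hb h2q h1q hab (by omega)
  have key : G i 1 * G a 1 * G b 1 =
      (G i 1 * G a 1 - G i 2 * G a 2) * G b 1 + G i 2 * (G a 2 * G b 1) := by noncomm_ring
  rw [z1, z2] at key
  simpa using key

lemma W2 {j c d : ℕ} (hj : j ∈ Icc 1 q) (hc : c ∈ Icc 1 q) (hd : d ∈ Icc 1 q)
    (hjc : j ≠ c) (hcd : c ≠ d) : G 1 j * G 1 c * G 1 d = 0 := by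
  have h1p : (1 : ℕ) ∈ Icc 1 p := memIcc le_rfl (by omega)
  have h2p : (2 : ℕ) ∈ Icc 1 p := memIcc (by omega) hp2
  have z1 : G 1 j * G 1 c - G 2 j * G 2 c = 0 :=
    sub_eq_zero_of_eq (D3 hrel half h2p hj hc hjc).symm
  have z2 : G 2 c * G 1 d = 0 := D1 hrel half h2p h1p hc hd (by omega) hcd
  have key : G 1 j * G 1 c * G 1 d =
      (G 1 j * G 1 c - G 2 j * G 2 c) * G 1 d + G 2 j * (G 2 c * G 1 d) := by noncomm_ring
  rw [z1, z2] at key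
  simpa using key

lemma W3 {b i : ℕ} (hb : b ∈ Icc 1 p) (hi : i ∈ Icc 1 p) (hbi : b ≠ i) (hb1 : b ≠ 1) :
    G b 1 * G i 1 * G i 1 = G b 1 * G 1 1 * G 1 1 := by
  have h1p : (1 : ℕ) ∈ Icc 1 p := memIcc le_rfl (by omega)
  have h1q : (1 : ℕ) ∈ Icc 1 q := memIcc le_rfl (by omega)
  have h2q : (2 : ℕ) ∈ Icc 1 q := memIcc (by omega) hq2
  have z1 : G b 1 * G i 1 - G b 2 * G i 2 = 0 :=
    sub_eq_zero_of_eq (D2 hrel half hb hi h2q hbi).symm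
  have z2 : G i 2 * G i 1 - G 1 2 * G 1 1 = 0 :=
    sub_eq_zero_of_eq (D3 hrel half hi h2q h1q (by omega))
  have z3 : G b 2 * G 1 2 - G b 1 * G 1 1 = 0 :=
    sub_eq_zero_of_eq (D2 hrel half hb h1p h2q hb1)
  have key : G b 1 * G i 1 * G i 1 - G b 1 * G 1 1 * G 1 1 =
      (G b 1 * G i 1 - G b 2 * G i 2) * G i 1 + G b 2 * (G i 2 * G i 1 - G 1 2 * G 1 1)
      + (G b 2 * G 1 2 - G b 1 * G 1 1) * G 1 1 := by noncomm_ring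
  rw [z1, z2, z3] at key
  exact sub_eq_zero.mp (by simpa using key)

lemma W4 {i : ℕ} (hi : i ∈ Icc 1 p) (hi1 : i ≠ 1) :
    G 1 1 * G i 1 * G i 1 = G 1 2 * G 1 2 * G 1 1 := by
  have h1p : (1 : ℕ) ∈ Icc 1 p := memIcc le_rfl (by omega)
  have h1q : (1 : ℕ) ∈ Icc 1 q := memIcc le_rfl (by omega)
  have h2q : (2 : ℕ) ∈ Icc 1 q := memIcc (by omega) hq2
  have z1 : G 1 1 * G i 1 - G 1 2 * G i 2 = 0 :=
    sub_eq_zero_of_eq (D2 hrel half h1p hi h2q (fun h => hi1 h.symm)).symm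
  have z2 : G i 2 * G i 1 - G 1 2 * G 1 1 = 0 :=
    sub_eq_zero_of_eq (D3 hrel half hi h2q h1q (by omega))
  have key : G 1 1 * G i 1 * G i 1 - G 1 2 * G 1 2 * G 1 1 =
      (G 1 1 * G i 1 - G 1 2 * G i 2) * G i 1 + G 1 2 * (G i 2 * G i 1 - G 1 2 * G 1 1) := by
    noncomm_ring
  rw [z1, z2] at key
  exact sub_eq_zero.mp (by simpa using key)

lemma W5 {j : ℕ} (hj : j ∈ Icc 1 q) (hj1 : j ≠ 1) :
    G 1 1 * G 1 j * G 1 j = G 2 1 * G 2 1 * G 1 1 := by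
  have h1p : (1 : ℕ) ∈ Icc 1 p := memIcc le_rfl (by omega)
  have h2p : (2 : ℕ) ∈ Icc 1 p := memIcc (by omega) hp2
  have h1q : (1 : ℕ) ∈ Icc 1 q := memIcc le_rfl (by omega)
  have z1 : G 1 1 * G 1 j - G 2 1 * G 2 j = 0 :=
    sub_eq_zero_of_eq (D3 hrel half h2p h1q hj (fun h => hj1 h.symm)).symm
  have z2 : G 2 j * G 1 j - G 2 1 * G 1 1 = 0 :=
    sub_eq_zero_of_eq (D2 hrel half h2p h1p hj (by omega))
  have key : G 1 1 * G 1 j * G 1 j - G 2 1 * G 2 1 * G 1 1 =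
      (G 1 1 * G 1 j - G 2 1 * G 2 j) * G 1 j + G 2 1 * (G 2 j * G 1 j - G 2 1 * G 1 1) := by
    noncomm_ring
  rw [z1, z2] at key
  exact sub_eq_zero.mp (by simpa using key)

lemma W6 {j c : ℕ} (hj : j ∈ Icc 1 q) (hc : c ∈ Icc 1 q) (hjc : j ≠ c) (hj1 : j ≠ 1) :
    G 1 j * G 1 c * G 1 c = G 1 j * G 1 1 * G 1 1 := by
  have h1p : (1 : ℕ) ∈ Icc 1 p := memIcc le_rfl (by omega)
  have h2p : (2 : ℕ) ∈ Icc 1 p := memIcc (by omega) hp2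
  have h1q : (1 : ℕ) ∈ Icc 1 q := memIcc le_rfl (by omega)
  have z1 : G 1 j * G 1 c - G 2 j * G 2 c = 0 :=
    sub_eq_zero_of_eq (D3 hrel half h2p hj hc hjc).symm
  have z2 : G 2 c * G 1 c - G 2 1 * G 1 1 = 0 :=
    sub_eq_zero_of_eq (D2 hrel half h2p h1p hc (by omega))
  have z3 : G 2 j * G 2 1 - G 1 j * G 1 1 = 0 :=
    sub_eq_zero_of_eq (D3 hrel half h2p hj h1q hj1)
  have key : G 1 j * G 1 c * G 1 c - G 1 j * G 1 1 * G 1 1 =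
      (G 1 j * G 1 c - G 2 j * G 2 c) * G 1 c + G 2 j * (G 2 c * G 1 c - G 2 1 * G 1 1)
      + (G 2 j * G 2 1 - G 1 j * G 1 1) * G 1 1 := by noncomm_ring
  rw [z1, z2, z3] at key
  exact sub_eq_zero.mp (by simpa using key)

lemma W7 : G 1 2 * G 1 2 * G 1 1 = G 1 1 * G 2 1 * G 2 1 := by
  have h1p : (1 : ℕ) ∈ Icc 1 p := memIcc le_rfl (by omega)
  have h2p : (2 : ℕ) ∈ Icc 1 p := memIcc (by omega) hp2
  have h1q : (1 : ℕ) ∈ Icc 1 q := memIcc le_rfl (by omega)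
  have h2q : (2 : ℕ) ∈ Icc 1 q := memIcc (by omega) hq2
  have z1 : G 1 2 * G 1 1 - G 2 2 * G 2 1 = 0 :=
    sub_eq_zero_of_eq (D3 hrel half h2p h2q h1q (by omega)).symm
  have z2 : G 1 2 * G 2 2 - G 1 1 * G 2 1 = 0 :=
    sub_eq_zero_of_eq (D2 hrel half h1p h2p h2q (by omega))
  have key : G 1 2 * G 1 2 * G 1 1 - G 1 1 * G 2 1 * G 2 1 =
      G 1 2 * (G 1 2 * G 1 1 - G 2 2 * G 2 1) + (G 1 2 * G 2 2 - G 1 1 * G 2 1) * G 2 1 := by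
    noncomm_ring
  rw [z1, z2] at key
  exact sub_eq_zero.mp (by simpa using key)

lemma W8 {c d : ℕ} (hc : c ∈ Icc 1 q) (hd : d ∈ Icc 1 q) (hcd : c ≠ d) (hd1 : d ≠ 1) :
    G 1 c * G 1 c * G 1 d = G 1 1 * G 1 1 * G 1 d := by
  have h1p : (1 : ℕ) ∈ Icc 1 p := memIcc le_rfl (by omega)
  have h2p : (2 : ℕ) ∈ Icc 1 p := memIcc (by omega) hp2
  have h1q : (1 : ℕ) ∈ Icc 1 q := memIcc le_rfl (by omega)
  have z1 : G 2 c * G 2 d - G 1 c * G 1 d = 0 :=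
    sub_eq_zero_of_eq (D3 hrel half h2p hc hd hcd)
  have z2 : G 1 c * G 2 c - G 1 1 * G 2 1 = 0 :=
    sub_eq_zero_of_eq (D2 hrel half h1p h2p hc (by omega))
  have z3 : G 2 1 * G 2 d - G 1 1 * G 1 d = 0 :=
    sub_eq_zero_of_eq (D3 hrel half h2p h1q hd (fun h => hd1 h.symm))
  have key : G 1 c * G 1 c * G 1 d - G 1 1 * G 1 1 * G 1 d =
      - (G 1 c * (G 2 c * G 2 d - G 1 c * G 1 d)) + (G 1 c * G 2 c - G 1 1 * G 2 1) * G 2 d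
      + G 1 1 * (G 2 1 * G 2 d - G 1 1 * G 1 d) := by noncomm_ring
  rw [z1, z2, z3] at key
  exact sub_eq_zero.mp (by simpa using key)

lemma W9 {a b : ℕ} (ha : a ∈ Icc 1 p) (hb : b ∈ Icc 1 p) (hab : a ≠ b) (hb1 : b ≠ 1) :
    G a 1 * G a 1 * G b 1 = G 1 1 * G 1 1 * G b 1 := by
  have h1p : (1 : ℕ) ∈ Icc 1 p := memIcc le_rfl (by omega)
  have h1q : (1 : ℕ) ∈ Icc 1 q := memIcc le_rfl (by omega)
  have h2q : (2 : ℕ) ∈ Icc 1 q := memIcc (by omega) hq2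
  have z1 : G a 2 * G b 2 - G a 1 * G b 1 = 0 :=
    sub_eq_zero_of_eq (D2 hrel half ha hb h2q hab)
  have z2 : G a 1 * G a 2 - G 1 1 * G 1 2 = 0 :=
    sub_eq_zero_of_eq (D3 hrel half ha h1q h2q (by omega))
  have z3 : G 1 2 * G b 2 - G 1 1 * G b 1 = 0 :=
    sub_eq_zero_of_eq (D2 hrel half h1p hb h2q (fun h => hb1 h.symm))
  have key : G a 1 * G a 1 * G b 1 - G 1 1 * G 1 1 * G b 1 =
      - (G a 1 * (G a 2 * G b 2 - G a 1 * G b 1)) + (G a 1 * G a 2 - G 1 1 * G 1 2) * G b 2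
      + G 1 1 * (G 1 2 * G b 2 - G 1 1 * G b 1) := by noncomm_ring
  rw [z1, z2, z3] at key
  exact sub_eq_zero.mp (by simpa using key)

lemma W10 {i : ℕ} (hi : i ∈ Icc 1 p) (hi1 : i ≠ 1) :
    G i 1 * G i 1 * G 1 1 = G 1 1 * G 1 2 * G 1 2 := by
  have h1p : (1 : ℕ) ∈ Icc 1 p := memIcc le_rfl (by omega)
  have h1q : (1 : ℕ) ∈ Icc 1 q := memIcc le_rfl (by omega)
  have h2q : (2 : ℕ) ∈ Icc 1 q := memIcc (by omega) hq2
  have z1 : G i 2 * G 1 2 - G i 1 * G 1 1 = 0 :=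
    sub_eq_zero_of_eq (D2 hrel half hi h1p h2q hi1)
  have z2 : G i 1 * G i 2 - G 1 1 * G 1 2 = 0 :=
    sub_eq_zero_of_eq (D3 hrel half hi h1q h2q (by omega))
  have key : G i 1 * G i 1 * G 1 1 - G 1 1 * G 1 2 * G 1 2 =
      - (G i 1 * (G i 2 * G 1 2 - G i 1 * G 1 1)) + (G i 1 * G i 2 - G 1 1 * G 1 2) * G 1 2 := by
    noncomm_ring
  rw [z1, z2] at key
  exact sub_eq_zero.mp (by simpa using key)

lemma W11 {c : ℕ} (hc : c ∈ Icc 1 q) (hc1 : c ≠ 1) :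
    G 1 c * G 1 c * G 1 1 = G 1 1 * G 2 1 * G 2 1 := by
  have h1p : (1 : ℕ) ∈ Icc 1 p := memIcc le_rfl (by omega)
  have h2p : (2 : ℕ) ∈ Icc 1 p := memIcc (by omega) hp2
  have h1q : (1 : ℕ) ∈ Icc 1 q := memIcc le_rfl (by omega)
  have z1 : G 2 c * G 2 1 - G 1 c * G 1 1 = 0 :=
    sub_eq_zero_of_eq (D3 hrel half h2p hc h1q hc1)
  have z2 : G 1 c * G 2 c - G 1 1 * G 2 1 = 0 :=
    sub_eq_zero_of_eq (D2 hrel half h1p h2p hc (by omega))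
  have key : G 1 c * G 1 c * G 1 1 - G 1 1 * G 2 1 * G 2 1 =
      - (G 1 c * (G 2 c * G 2 1 - G 1 c * G 1 1)) + (G 1 c * G 2 c - G 1 1 * G 2 1) * G 2 1 := by
    noncomm_ring
  rw [z1, z2] at key
  exact sub_eq_zero.mp (by simpa using key)


/-- hA -/
lemma hA {i j : ℕ} (hi : i ∈ Icc 1 p) (hj : j ∈ Icc 1 q) (hj1 : j ≠ 1) :
    G i j * G i 1 * G i 1 + G i 1 * G i 1 * G i j = G i j := by
  have h1q : (1 : ℕ) ∈ Icc 1 q := memIcc le_rfl (by omega)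
  have h := hrel i hi i hi i hi j hj 1 h1q 1 h1q
  rw [if_neg (fun hx => hj1 hx.1), if_pos ⟨rfl, rfl⟩, zero_add] at h
  exact h

/-- hB -/
lemma hB {i : ℕ} (hi : i ∈ Icc 1 p) (hi1 : i ≠ 1) :
    G 1 1 * G i 1 * G i 1 + G i 1 * G i 1 * G 1 1 = G 1 1 := by
  have h1p : (1 : ℕ) ∈ Icc 1 p := memIcc le_rfl (by omega)
  have h1q : (1 : ℕ) ∈ Icc 1 q := memIcc le_rfl (by omega)
  have h := hrel 1 h1p i hi i hi 1 h1q 1 h1q 1 h1q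
  rw [if_pos ⟨rfl, rfl⟩, if_neg (fun hx => hi1 hx.2), add_zero] at h
  exact h

/-- hC -/
lemma hC {j : ℕ} (hj : j ∈ Icc 1 q) (hj1 : j ≠ 1) :
    G 1 1 * G 1 j * G 1 j + G 1 j * G 1 j * G 1 1 = G 1 1 := by
  have h1p : (1 : ℕ) ∈ Icc 1 p := memIcc le_rfl (by omega)
  have h1q : (1 : ℕ) ∈ Icc 1 q := memIcc le_rfl (by omega)
  have h := hrel 1 h1p 1 h1p 1 h1p 1 h1q j hj j hj
  rw [if_neg (fun hx => hj1 hx.1.symm), if_pos ⟨rfl, rfl⟩, zero_add] at h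
  exact h

/-- hD -/
lemma hD {j : ℕ} (hj : j ∈ Icc 1 q) (hj1 : j ≠ 1) :
    G 1 1 * G 1 1 * G 1 j + G 1 j * G 1 1 * G 1 1 = G 1 j := by
  have h1p : (1 : ℕ) ∈ Icc 1 p := memIcc le_rfl (by omega)
  have h1q : (1 : ℕ) ∈ Icc 1 q := memIcc le_rfl (by omega)
  have h := hrel 1 h1p 1 h1p 1 h1p 1 h1q 1 h1q j hj
  rw [if_pos ⟨rfl, rfl⟩, if_neg (fun hx => hj1 hx.1), add_zero] at h
  exact h

/-- hE -/
lemma hE {b : ℕ} (hb : b ∈ Icc 1 p) (hb1 : b ≠ 1) :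
    G 1 1 * G 1 1 * G b 1 + G b 1 * G 1 1 * G 1 1 = G b 1 := by
  have h1p : (1 : ℕ) ∈ Icc 1 p := memIcc le_rfl (by omega)
  have h1q : (1 : ℕ) ∈ Icc 1 q := memIcc le_rfl (by omega)
  have h := hrel 1 h1p 1 h1p b hb 1 h1q 1 h1q 1 h1q
  rw [if_neg (fun hx => hb1 hx.2.symm), if_pos ⟨rfl, rfl⟩, zero_add] at h
  exact h

/-- hF -/
lemma hF {b j : ℕ} (hb : b ∈ Icc 1 p) (hj : j ∈ Icc 1 q) (hn : ¬(j = 1 ∧ b = 1)) :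
    G 1 j * G 1 1 * G b 1 + G b 1 * G 1 1 * G 1 j = G b j := by
  have h1p : (1 : ℕ) ∈ Icc 1 p := memIcc le_rfl (by omega)
  have h1q : (1 : ℕ) ∈ Icc 1 q := memIcc le_rfl (by omega)
  have h := hrel 1 h1p 1 h1p b hb j hj 1 h1q 1 h1q
  rw [if_neg (fun hx => hn ⟨hx.1, hx.2.symm⟩), if_pos ⟨rfl, rfl⟩, zero_add] at h
  exact h

/-- commuting of the two idempotent words -/
lemma commlem : G 1 1 * G 1 1 * G 1 2 * G 1 2 = G 1 2 * G 1 2 * G 1 1 * G 1 1 := by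
  have h2q : (2 : ℕ) ∈ Icc 1 q := memIcc (by omega) hq2
  have z1 : G 1 1 * G 1 2 * G 1 2 + G 1 2 * G 1 2 * G 1 1 - G 1 1 = 0 :=
    sub_eq_zero_of_eq (hC hrel half hp2 hq2 h2q (by omega))
  have key : G 1 1 * G 1 1 * G 1 2 * G 1 2 - G 1 2 * G 1 2 * G 1 1 * G 1 1 =
      G 1 1 * (G 1 1 * G 1 2 * G 1 2 + G 1 2 * G 1 2 * G 1 1 - G 1 1)
      - (G 1 1 * G 1 2 * G 1 2 + G 1 2 * G 1 2 * G 1 1 - G 1 1) * G 1 1 := by noncomm_ring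
  rw [z1] at key
  exact sub_eq_zero.mp (by simpa using key)

/-- E0 -/
lemma E0 : G 1 1 * G 1 1 * G 2 1 * G 2 1 = G 1 1 * G 1 1 - G 1 1 * G 1 1 * G 1 2 * G 1 2 := by
  have h2q : (2 : ℕ) ∈ Icc 1 q := memIcc (by omega) hq2
  have z2 : G 1 1 * G 2 1 * G 2 1 - G 1 2 * G 1 2 * G 1 1 = 0 :=
    sub_eq_zero_of_eq (W7 hrel half hp2 hq2).symm
  have z3 : G 1 1 * G 1 2 * G 1 2 + G 1 2 * G 1 2 * G 1 1 - G 1 1 = 0 :=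
    sub_eq_zero_of_eq (hC hrel half hp2 hq2 h2q (by omega))
  have z4 : G 1 1 * G 1 1 * G 1 2 * G 1 2 - G 1 2 * G 1 2 * G 1 1 * G 1 1 = 0 :=
    sub_eq_zero_of_eq (commlem hrel half hp2 hq2)
  have key : G 1 1 * G 1 1 * G 2 1 * G 2 1 - (G 1 1 * G 1 1 - G 1 1 * G 1 1 * G 1 2 * G 1 2) =
      G 1 1 * (G 1 1 * G 2 1 * G 2 1 - G 1 2 * G 1 2 * G 1 1)
      + (G 1 1 * G 1 2 * G 1 2 + G 1 2 * G 1 2 * G 1 1 - G 1 1) * G 1 1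
      + (G 1 1 * G 1 1 * G 1 2 * G 1 2 - G 1 2 * G 1 2 * G 1 1 * G 1 1) := by noncomm_ring
  rw [z2, z3, z4] at key
  exact sub_eq_zero.mp (by simpa using key)

/-- eA -/
lemma eA {j : ℕ} (hj : j ∈ Icc 1 q) (hj1 : j ≠ 1) :
    G 1 j * G 1 1 * G 1 1 * G 1 j = G 1 j * G 1 j - G 1 1 * G 1 1 * G 1 2 * G 1 2 := by
  have z1 : G 1 1 * G 1 1 * G 1 j + G 1 j * G 1 1 * G 1 1 - G 1 j = 0 :=
    sub_eq_zero_of_eq (hD hrel half hp2 hq2 hj hj1)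
  have z2 : G 1 j * G 1 j * G 1 1 - G 1 1 * G 2 1 * G 2 1 = 0 :=
    sub_eq_zero_of_eq (W11 hrel half hp2 hq2 hj hj1)
  have z3 : G 1 2 * G 1 2 * G 1 1 - G 1 1 * G 2 1 * G 2 1 = 0 :=
    sub_eq_zero_of_eq (W7 hrel half hp2 hq2)
  have z4 : G 1 1 * G 1 1 * G 1 2 * G 1 2 - G 1 2 * G 1 2 * G 1 1 * G 1 1 = 0 :=
    sub_eq_zero_of_eq (commlem hrel half hp2 hq2)
  have key : G 1 j * G 1 1 * G 1 1 * G 1 j - (G 1 j * G 1 j - G 1 1 * G 1 1 * G 1 2 * G 1 2) =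
      G 1 j * (G 1 1 * G 1 1 * G 1 j + G 1 j * G 1 1 * G 1 1 - G 1 j)
      - (G 1 j * G 1 j * G 1 1 - G 1 1 * G 2 1 * G 2 1) * G 1 1
      + (G 1 2 * G 1 2 * G 1 1 - G 1 1 * G 2 1 * G 2 1) * G 1 1
      + (G 1 1 * G 1 1 * G 1 2 * G 1 2 - G 1 2 * G 1 2 * G 1 1 * G 1 1) := by noncomm_ring
  rw [z1, z2, z3, z4] at key
  exact sub_eq_zero.mp (by simpa using key)

/-- eArow -/
lemma eArow {i : ℕ} (hi : i ∈ Icc 1 p) (hi1 : i ≠ 1) :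
    G i 1 * G 1 1 * G 1 1 * G i 1 =
      G i 1 * G i 1 - (G 1 1 * G 1 1 - G 1 1 * G 1 1 * G 1 2 * G 1 2) := by
  have h2q : (2 : ℕ) ∈ Icc 1 q := memIcc (by omega) hq2
  have z1 : G 1 1 * G 1 1 * G i 1 + G i 1 * G 1 1 * G 1 1 - G i 1 = 0 :=
    sub_eq_zero_of_eq (hE hrel half hp2 hq2 hi hi1)
  have z2 : G i 1 * G i 1 * G 1 1 - G 1 1 * G 1 2 * G 1 2 = 0 :=
    sub_eq_zero_of_eq (W10 hrel half hp2 hq2 hi hi1)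
  have z3 : G 1 1 * G 1 2 * G 1 2 + G 1 2 * G 1 2 * G 1 1 - G 1 1 = 0 :=
    sub_eq_zero_of_eq (hC hrel half hp2 hq2 h2q (by omega))
  have z4 : G 1 1 * G 1 1 * G 1 2 * G 1 2 - G 1 2 * G 1 2 * G 1 1 * G 1 1 = 0 :=
    sub_eq_zero_of_eq (commlem hrel half hp2 hq2)
  have key : G i 1 * G 1 1 * G 1 1 * G i 1 -
      (G i 1 * G i 1 - (G 1 1 * G 1 1 - G 1 1 * G 1 1 * G 1 2 * G 1 2)) =
      G i 1 * (G 1 1 * G 1 1 * G i 1 + G i 1 * G 1 1 * G 1 1 - G i 1)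
      - (G i 1 * G i 1 * G 1 1 - G 1 1 * G 1 2 * G 1 2) * G 1 1
      - (G 1 1 * G 1 2 * G 1 2 + G 1 2 * G 1 2 * G 1 1 - G 1 1) * G 1 1
      - (G 1 1 * G 1 1 * G 1 2 * G 1 2 - G 1 2 * G 1 2 * G 1 1 * G 1 1) := by noncomm_ring
  rw [z1, z2, z3, z4] at key
  exact sub_eq_zero.mp (by simpa using key)

/-- eEE -/
lemma eEE {i : ℕ} (hi : i ∈ Icc 1 p) (hi1 : i ≠ 1) :
    G i 1 * G i 1 * G 1 1 * G 1 1 = G 1 1 * G 1 1 - G 1 1 * G 1 1 * G 1 2 * G 1 2 := by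
  have h2q : (2 : ℕ) ∈ Icc 1 q := memIcc (by omega) hq2
  have z2 : G i 1 * G i 1 * G 1 1 - G 1 1 * G 1 2 * G 1 2 = 0 :=
    sub_eq_zero_of_eq (W10 hrel half hp2 hq2 hi hi1)
  have z3 : G 1 1 * G 1 2 * G 1 2 + G 1 2 * G 1 2 * G 1 1 - G 1 1 = 0 :=
    sub_eq_zero_of_eq (hC hrel half hp2 hq2 h2q (by omega))
  have z4 : G 1 1 * G 1 1 * G 1 2 * G 1 2 - G 1 2 * G 1 2 * G 1 1 * G 1 1 = 0 :=
    sub_eq_zero_of_eq (commlem hrel half hp2 hq2)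
  have key : G i 1 * G i 1 * G 1 1 * G 1 1 - (G 1 1 * G 1 1 - G 1 1 * G 1 1 * G 1 2 * G 1 2) =
      (G i 1 * G i 1 * G 1 1 - G 1 1 * G 1 2 * G 1 2) * G 1 1
      + (G 1 1 * G 1 2 * G 1 2 + G 1 2 * G 1 2 * G 1 1 - G 1 1) * G 1 1
      + (G 1 1 * G 1 1 * G 1 2 * G 1 2 - G 1 2 * G 1 2 * G 1 1 * G 1 1) := by noncomm_ring
  rw [z2, z3, z4] at key
  exact sub_eq_zero.mp (by simpa using key)

/-- D4: square of a general generator -/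
lemma D4 {i j : ℕ} (hi : i ∈ Icc 1 p) (hj : j ∈ Icc 1 q) (hi1 : i ≠ 1) (hj1 : j ≠ 1) :
    G i j * G i j = G i 1 * G 1 1 * G 1 1 * G i 1 + G 1 j * G 1 1 * G 1 1 * G 1 j := by
  have h1p : (1 : ℕ) ∈ Icc 1 p := memIcc le_rfl (by omega)
  have h1q : (1 : ℕ) ∈ Icc 1 q := memIcc le_rfl (by omega)
  have z1 : G i j * G i 1 * G i 1 + G i 1 * G i 1 * G i j - G i j = 0 :=
    sub_eq_zero_of_eq (hA hrel half hp2 hq2 hi hj hj1)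
  have z2 : G i j * G i 1 - G 1 j * G 1 1 = 0 :=
    sub_eq_zero_of_eq (D3 hrel half hi hj h1q hj1)
  have z3 : G i 1 * G i j - G 1 1 * G 1 j = 0 :=
    sub_eq_zero_of_eq (D3 hrel half hi h1q hj (fun h => hj1 h.symm))
  have z4 : G 1 j * G i j - G 1 1 * G i 1 = 0 :=
    sub_eq_zero_of_eq (D2 hrel half h1p hi hj (fun h => hi1 h.symm))
  have key : G i j * G i j - (G i 1 * G 1 1 * G 1 1 * G i 1 + G 1 j * G 1 1 * G 1 1 * G 1 j) =
      -((G i j * G i 1 * G i 1 + G i 1 * G i 1 * G i j - G i j) * G i j)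
      + (G 1 j * G 1 1) * (G i 1 * G i j - G 1 1 * G 1 j)
      + (G i j * G i 1 - G 1 j * G 1 1) * (G 1 1 * G 1 j)
      + (G i j * G i 1 - G 1 j * G 1 1) * (G i 1 * G i j - G 1 1 * G 1 j)
      + (G i 1 * G 1 1) * (G 1 j * G i j - G 1 1 * G i 1)
      + G i 1 * (G i 1 * G i j - G 1 1 * G 1 j) * G i j := by noncomm_ring
  rw [z1, z2, z3, z4] at key
  exact sub_eq_zero.mp (by simpa using key)

end

end TripleMU
set_option maxHeartbeats 1600000 in
theorem generators_recovered_and_spanned {F : Type*} [Field F] [CharZero F] {A : Type*}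
    [NonUnitalRing A] [Module F A] [IsScalarTower F A A] [SMulCommClass F A A]
    {p q : ℕ} (hp : 1 < p) (hq : 1 < q) (G : ℕ → ℕ → A)
    (hrel : ∀ i ∈ Finset.Icc 1 p, ∀ k ∈ Finset.Icc 1 p, ∀ s ∈ Finset.Icc 1 p,
      ∀ j ∈ Finset.Icc 1 q, ∀ l ∈ Finset.Icc 1 q, ∀ t ∈ Finset.Icc 1 q,
      G i j * G k l * G s t + G s t * G k l * G i j =
        (if j = l ∧ k = s then G i t else 0) + (if t = l ∧ k = i then G s j else 0))
    (M : ℕ → ℕ → A)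
    (hM1 : ∀ i ∈ Finset.Icc 1 p, ∀ k ∈ Finset.Icc 1 p, i ≠ k → M i k = G i 1 * G k 1)
    (hM2 : M 1 (p + 1) = G 1 2 * G 1 2 * G 1 1)
    (hM3 : ∀ i ∈ Finset.Icc 1 p, ∀ k ∈ Finset.Icc (p + 1) (p + q), (i, k) ≠ (1, p + 1) →
      M i k = G i 1 * G 1 1 * G 1 (k - p))
    (hM4 : ∀ i ∈ Finset.Icc (p + 1) (p + q), ∀ k ∈ Finset.Icc 1 p,
      M i k = -M k i + G k (i - p))
    (hM5 : ∀ i ∈ Finset.Icc (p + 1) (p + q), ∀ k ∈ Finset.Icc (p + 1) (p + q), i ≠ k →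
      M i k = G 1 (i - p) * G 1 (k - p))
    (hM6 : M 1 1 = G 1 1 * G 1 1 * G 1 2 * G 1 2)
    (hM7 : ∀ i ∈ Finset.Icc 2 p, M i i = -(G 1 1 * G 1 1 * G 2 1 * G 2 1) + G i 1 * G i 1)
    (hM8 : ∀ i ∈ Finset.Icc (p + 1) (p + q),
      M i i = -(G 1 1 * G 1 1 * G 1 2 * G 1 2) + G 1 (i - p) * G 1 (i - p)) :
    (∀ i ∈ Finset.Icc 1 p, ∀ j ∈ Finset.Icc 1 q, G i j = M i (j + p) + M (j + p) i) ∧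
      (∀ x ∈ NonUnitalAlgebra.adjoin F
          {a : A | ∃ i ∈ Finset.Icc 1 p, ∃ j ∈ Finset.Icc 1 q, a = G i j},
        x ∈ Submodule.span F
          {a : A | ∃ i ∈ Finset.Icc 1 (p + q), ∃ k ∈ Finset.Icc 1 (p + q), a = M i k}) := by
  classical
  have hp2 : 2 ≤ p := hp
  have hq2 : 2 ≤ q := hq
  have half : ∀ x y : A, x + x = y + y → x = y := by
    intro x y h
    have h2 : (2 : F) • x = (2 : F) • y := by rw [two_smul, two_smul]; exact h
    calc x = (2 : F)⁻¹ • ((2 : F) • x) := (inv_smul_smul₀ two_ne_zero x).symm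
      _ = (2 : F)⁻¹ • ((2 : F) • y) := by rw [h2]
      _ = y := inv_smul_smul₀ two_ne_zero y
  have hrel' : TripleMU.Rel p q G := hrel
  have h1p : (1 : ℕ) ∈ Finset.Icc 1 p := TripleMU.memIcc le_rfl (by omega)
  have h2p : (2 : ℕ) ∈ Finset.Icc 1 p := TripleMU.memIcc (by omega) hp2
  have h1q : (1 : ℕ) ∈ Finset.Icc 1 q := TripleMU.memIcc le_rfl (by omega)
  have h2q : (2 : ℕ) ∈ Finset.Icc 1 q := TripleMU.memIcc (by omega) hq2
  -- Part 1
  have part1 : ∀ i ∈ Finset.Icc 1 p, ∀ j ∈ Finset.Icc 1 q,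
      G i j = M i (j + p) + M (j + p) i := by
    intro i hi j hj
    have hjI := Finset.mem_Icc.mp hj
    have hmem : j + p ∈ Finset.Icc (p + 1) (p + q) := Finset.mem_Icc.mpr (by omega)
    have h4 := hM4 (j + p) hmem i hi
    rw [h4, Nat.add_sub_cancel]
    abel
  refine ⟨part1, ?_⟩
  set Tset : Set A :=
    {a : A | ∃ i ∈ Finset.Icc 1 (p + q), ∃ k ∈ Finset.Icc 1 (p + q), a = M i k} with hTdef
  set W : Submodule F A := Submodule.span F Tset with hWdef
  have mM : ∀ a b : ℕ, 1 ≤ a → a ≤ p + q → 1 ≤ b → b ≤ p + q → M a b ∈ W :=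
    fun a b u1 u2 u3 u4 => Submodule.subset_span
      ⟨a, TripleMU.memIcc u1 u2, b, TripleMU.memIcc u3 u4, rfl⟩
  have mG : ∀ i ∈ Finset.Icc 1 p, ∀ j ∈ Finset.Icc 1 q, G i j ∈ W := by
    intro i hi j hj
    have hiI := Finset.mem_Icc.mp hi
    have hjI := Finset.mem_Icc.mp hj
    rw [part1 i hi j hj]
    exact add_mem (mM i (j + p) (by omega) (by omega) (by omega) (by omega))
      (mM (j + p) i (by omega) (by omega) (by omega) (by omega))
  -- word = M equalities
  have eM1 : ∀ a ∈ Finset.Icc 1 p, ∀ b ∈ Finset.Icc 1 p, a ≠ b →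
      G a 1 * G b 1 = M a b := fun a ha b hb hab => (hM1 a ha b hb hab).symm
  have eM3 : ∀ a ∈ Finset.Icc 1 p, ∀ c ∈ Finset.Icc 1 q, ¬(a = 1 ∧ c = 1) →
      G a 1 * G 1 1 * G 1 c = M a (c + p) := by
    intro a ha c hc hn
    have hcI := Finset.mem_Icc.mp hc
    have hcp : c + p ∈ Finset.Icc (p + 1) (p + q) := Finset.mem_Icc.mpr (by omega)
    have hne : (a, c + p) ≠ (1, p + 1) := by
      intro hx
      have h1 : a = 1 := congrArg Prod.fst hx
      have h2 : c + p = p + 1 := congrArg Prod.snd hx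
      exact hn ⟨h1, by omega⟩
    have h := hM3 a ha (c + p) hcp hne
    rw [Nat.add_sub_cancel] at h
    exact h.symm
  have eM5 : ∀ c ∈ Finset.Icc 1 q, ∀ d ∈ Finset.Icc 1 q, c ≠ d →
      G 1 c * G 1 d = M (c + p) (d + p) := by
    intro c hc d hd hcd
    have hcI := Finset.mem_Icc.mp hc
    have hdI := Finset.mem_Icc.mp hd
    have h := hM5 (c + p) (Finset.mem_Icc.mpr (by omega)) (d + p)
      (Finset.mem_Icc.mpr (by omega)) (by omega)
    rw [Nat.add_sub_cancel, Nat.add_sub_cancel] at h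
    exact h.symm
  have eM2 : G 1 2 * G 1 2 * G 1 1 = M 1 (p + 1) := hM2.symm
  have mM2 : G 1 2 * G 1 2 * G 1 1 ∈ W := by
    rw [eM2]; exact mM 1 (p + 1) (by omega) (by omega) (by omega) (by omega)
  have mM11w : G 1 1 * G 1 1 * G 1 2 * G 1 2 ∈ W := by
    rw [← hM6]; exact mM 1 1 (by omega) (by omega) (by omega) (by omega)
  have mFc : ∀ c ∈ Finset.Icc 1 q, G 1 c * G 1 c ∈ W := by
    intro c hc
    have hcI := Finset.mem_Icc.mp hc
    have h := hM8 (c + p) (Finset.mem_Icc.mpr (by omega))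
    rw [Nat.add_sub_cancel, ← hM6] at h
    have hx : G 1 c * G 1 c = M 1 1 + M (c + p) (c + p) := by rw [h]; abel
    rw [hx]
    exact add_mem (mM 1 1 (by omega) (by omega) (by omega) (by omega))
      (mM (c + p) (c + p) (by omega) (by omega) (by omega) (by omega))
  have me : G 1 1 * G 1 1 ∈ W := mFc 1 h1q
  have mEa : ∀ a ∈ Finset.Icc 1 p, G a 1 * G a 1 ∈ W := by
    intro a ha
    have haI := Finset.mem_Icc.mp ha
    by_cases ha1 : a = 1
    · subst ha1; exact me
    · have h7 := hM7 a (Finset.mem_Icc.mpr ⟨by omega, haI.2⟩)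
      rw [TripleMU.E0 hrel' half hp2 hq2] at h7
      have hx : G a 1 * G a 1 =
          M a a + (G 1 1 * G 1 1 - G 1 1 * G 1 1 * G 1 2 * G 1 2) := by rw [h7]; abel
      rw [hx]
      exact add_mem (mM a a (by omega) (by omega) (by omega) (by omega))
        (sub_mem me mM11w)
  -- hU1 : products of two generators
  have hU1 : ∀ a ∈ Finset.Icc 1 p, ∀ c ∈ Finset.Icc 1 q, ∀ i ∈ Finset.Icc 1 p,
      ∀ j ∈ Finset.Icc 1 q, G i j * G a c ∈ W := by
    intro a ha c hc i hi j hj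
    have haI := Finset.mem_Icc.mp ha
    have hcI := Finset.mem_Icc.mp hc
    by_cases hia : i = a
    · subst hia
      by_cases hjc : j = c
      · subst hjc
        by_cases hi1 : i = 1
        · subst hi1; exact mFc j hj
        by_cases hj1 : j = 1
        · subst hj1; exact mEa i hi
        · rw [TripleMU.D4 hrel' half hp2 hq2 hi hj hi1 hj1,
              TripleMU.eArow hrel' half hp2 hq2 hi hi1,
              TripleMU.eA hrel' half hp2 hq2 hj hj1]
          exact add_mem (sub_mem (mEa i hi) (sub_mem me mM11w))
            (sub_mem (mFc j hj) mM11w)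
      · rw [TripleMU.D3 hrel' half hi hj hc hjc, eM5 j hj c hc hjc]
        have hjI := Finset.mem_Icc.mp hj
        exact mM (j + p) (c + p) (by omega) (by omega) (by omega) (by omega)
    · by_cases hjc : j = c
      · subst hjc
        rw [TripleMU.D2 hrel' half hi ha hj hia, eM1 i hi a ha hia]
        have hiI := Finset.mem_Icc.mp hi
        exact mM i a (by omega) (by omega) (by omega) (by omega)
      · rw [TripleMU.D1 hrel' half hi ha hj hc hia hjc]; exact zero_mem _
  -- hU2 : G i j * (G a 1 * G b 1), a ≠ b
  have hU2 : ∀ a ∈ Finset.Icc 1 p, ∀ b ∈ Finset.Icc 1 p, a ≠ b → ∀ i ∈ Finset.Icc 1 p,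
      ∀ j ∈ Finset.Icc 1 q, G i j * (G a 1 * G b 1) ∈ W := by
    intro a ha b hb hab i hi j hj
    have haI := Finset.mem_Icc.mp ha
    have hbI := Finset.mem_Icc.mp hb
    have hiI := Finset.mem_Icc.mp hi
    have hjI := Finset.mem_Icc.mp hj
    by_cases hj1 : j = 1
    · subst hj1
      by_cases hia : i = a
      · subst hia
        by_cases hb1 : b = 1
        · subst hb1
          have hi1 : i ≠ 1 := hab
          have z1 : G i 1 * G i 1 * G 1 1 - G 1 1 * G 1 2 * G 1 2 = 0 :=
            sub_eq_zero_of_eq (TripleMU.W10 hrel' half hp2 hq2 hi hi1)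
          have z2 : G 1 1 * G 1 2 * G 1 2 + G 1 2 * G 1 2 * G 1 1 - G 1 1 = 0 :=
            sub_eq_zero_of_eq (TripleMU.hC hrel' half hp2 hq2 h2q (by omega))
          have key : G i 1 * (G i 1 * G 1 1) - (G 1 1 - G 1 2 * G 1 2 * G 1 1) =
              (G i 1 * G i 1 * G 1 1 - G 1 1 * G 1 2 * G 1 2)
              + (G 1 1 * G 1 2 * G 1 2 + G 1 2 * G 1 2 * G 1 1 - G 1 1) := by noncomm_ring
          rw [z1, z2] at key
          simp only [zero_mul, mul_zero, add_zero, zero_add, sub_zero, zero_sub,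
            neg_zero, neg_neg] at key
          rw [sub_eq_zero] at key
          rw [key]
          exact sub_mem (mG 1 h1p 1 h1q) mM2
        · have hib : i ≠ b := hab
          have z1 : G i 1 * G i 1 * G b 1 - G 1 1 * G 1 1 * G b 1 = 0 :=
            sub_eq_zero_of_eq (TripleMU.W9 hrel' half hp2 hq2 hi hb hib hb1)
          have z2 : G 1 1 * G 1 1 * G b 1 + G b 1 * G 1 1 * G 1 1 - G b 1 = 0 :=
            sub_eq_zero_of_eq (TripleMU.hE hrel' half hp2 hq2 hb hb1)
          have key : G i 1 * (G i 1 * G b 1) - (G b 1 - G b 1 * G 1 1 * G 1 1) =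
              (G i 1 * G i 1 * G b 1 - G 1 1 * G 1 1 * G b 1)
              + (G 1 1 * G 1 1 * G b 1 + G b 1 * G 1 1 * G 1 1 - G b 1) := by noncomm_ring
          rw [z1, z2] at key
          simp only [zero_mul, mul_zero, add_zero, zero_add, sub_zero, zero_sub,
            neg_zero, neg_neg] at key
          rw [sub_eq_zero] at key
          rw [key]
          refine sub_mem (mG b hb 1 h1q) ?_
          rw [eM3 b hb 1 h1q (fun hx => hb1 hx.1)]
          exact mM b (1 + p) (by omega) (by omega) (by omega) (by omega)
      · rw [← mul_assoc, TripleMU.W1 hrel' half hp2 hq2 hi ha hb hia hab]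
        exact zero_mem _
    · by_cases hia : i = a
      · subst hia
        have z1 : G i j * G i 1 - G 1 j * G 1 1 = 0 :=
          sub_eq_zero_of_eq (TripleMU.D3 hrel' half hi hj h1q hj1)
        have z2 : G 1 j * G 1 1 * G b 1 + G b 1 * G 1 1 * G 1 j - G b j = 0 :=
          sub_eq_zero_of_eq (TripleMU.hF hrel' half hp2 hq2 hb hj (fun hx => hj1 hx.1))
        have key : G i j * (G i 1 * G b 1) - (G b j - G b 1 * G 1 1 * G 1 j) =
            (G i j * G i 1 - G 1 j * G 1 1) * G b 1
            + (G 1 j * G 1 1 * G b 1 + G b 1 * G 1 1 * G 1 j - G b j) := by noncomm_ring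
        rw [z1, z2] at key
        simp only [zero_mul, mul_zero, add_zero, zero_add, sub_zero, zero_sub,
          neg_zero, neg_neg] at key
        rw [sub_eq_zero] at key
        rw [key]
        refine sub_mem (mG b hb j hj) ?_
        rw [eM3 b hb j hj (fun hx => hj1 hx.2)]
        exact mM b (j + p) (by omega) (by omega) (by omega) (by omega)
      · rw [← mul_assoc, TripleMU.D1 hrel' half hi ha hj h1q hia hj1, zero_mul]
        exact zero_mem _
  -- hU3 : G i j * (G 1 c * G 1 d), c ≠ d
  have hU3 : ∀ c ∈ Finset.Icc 1 q, ∀ d ∈ Finset.Icc 1 q, c ≠ d → ∀ i ∈ Finset.Icc 1 p,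
      ∀ j ∈ Finset.Icc 1 q, G i j * (G 1 c * G 1 d) ∈ W := by
    intro c hc d hd hcd i hi j hj
    have hcI := Finset.mem_Icc.mp hc
    have hdI := Finset.mem_Icc.mp hd
    have hiI := Finset.mem_Icc.mp hi
    have hjI := Finset.mem_Icc.mp hj
    by_cases hjc : j = c
    · subst hjc
      by_cases hi1 : i = 1
      · subst hi1
        by_cases hd1 : d = 1
        · subst hd1
          have hj1 : j ≠ 1 := hcd
          have z1 : G 1 j * G 1 j * G 1 1 - G 1 1 * G 2 1 * G 2 1 = 0 :=
            sub_eq_zero_of_eq (TripleMU.W11 hrel' half hp2 hq2 hj hj1)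
          have z2 : G 1 2 * G 1 2 * G 1 1 - G 1 1 * G 2 1 * G 2 1 = 0 :=
            sub_eq_zero_of_eq (TripleMU.W7 hrel' half hp2 hq2)
          have key : G 1 j * (G 1 j * G 1 1) - G 1 2 * G 1 2 * G 1 1 =
              (G 1 j * G 1 j * G 1 1 - G 1 1 * G 2 1 * G 2 1)
              - (G 1 2 * G 1 2 * G 1 1 - G 1 1 * G 2 1 * G 2 1) := by noncomm_ring
          rw [z1, z2] at key
          simp only [zero_mul, mul_zero, add_zero, zero_add, sub_zero, zero_sub,
            neg_zero, neg_neg] at key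
          rw [sub_eq_zero] at key
          rw [key]
          exact mM2
        · have z1 : G 1 j * G 1 j * G 1 d - G 1 1 * G 1 1 * G 1 d = 0 :=
            sub_eq_zero_of_eq (TripleMU.W8 hrel' half hp2 hq2 hj hd hcd hd1)
          have key : G 1 j * (G 1 j * G 1 d) - G 1 1 * G 1 1 * G 1 d =
              G 1 j * G 1 j * G 1 d - G 1 1 * G 1 1 * G 1 d := by noncomm_ring
          rw [z1] at key
          rw [sub_eq_zero] at key
          rw [key]
          rw [eM3 1 h1p d hd (fun hx => hd1 hx.2)]
          exact mM 1 (d + p) (by omega) (by omega) (by omega) (by omega)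
      · have z1 : G i j * G 1 j - G i 1 * G 1 1 = 0 :=
          sub_eq_zero_of_eq (TripleMU.D2 hrel' half hi h1p hj hi1)
        have key : G i j * (G 1 j * G 1 d) - G i 1 * G 1 1 * G 1 d =
            (G i j * G 1 j - G i 1 * G 1 1) * G 1 d := by noncomm_ring
        rw [z1] at key
        simp only [zero_mul, mul_zero, add_zero, zero_add, sub_zero, zero_sub,
          neg_zero, neg_neg] at key
        rw [sub_eq_zero] at key
        rw [key]
        rw [eM3 i hi d hd (fun hx => hi1 hx.1)]
        exact mM i (d + p) (by omega) (by omega) (by omega) (by omega)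
    · by_cases hi1 : i = 1
      · subst hi1
        rw [← mul_assoc, TripleMU.W2 hrel' half hp2 hq2 hj hc hd hjc hcd]
        exact zero_mem _
      · rw [← mul_assoc, TripleMU.D1 hrel' half hi h1p hj hc hi1 hjc, zero_mul]
        exact zero_mem _
  -- hU4 : G i j * (G a 1 * G 1 1 * G 1 c)
  have hU4 : ∀ a ∈ Finset.Icc 1 p, ∀ c ∈ Finset.Icc 1 q, ¬(a = 1 ∧ c = 1) →
      ∀ i ∈ Finset.Icc 1 p, ∀ j ∈ Finset.Icc 1 q,
      G i j * (G a 1 * G 1 1 * G 1 c) ∈ W := by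
    intro a ha c hc hn i hi j hj
    have haI := Finset.mem_Icc.mp ha
    have hcI := Finset.mem_Icc.mp hc
    have hiI := Finset.mem_Icc.mp hi
    have hjI := Finset.mem_Icc.mp hj
    by_cases hia : i = a
    · subst hia
      by_cases hj1 : j = 1
      · subst hj1
        by_cases hc1 : c = 1
        · subst hc1
          have hi1 : i ≠ 1 := fun h => hn ⟨h, rfl⟩
          have key : G i 1 * (G i 1 * G 1 1 * G 1 1) = G i 1 * G i 1 * G 1 1 * G 1 1 := by
            noncomm_ring
          rw [key, TripleMU.eEE hrel' half hp2 hq2 hi hi1]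
          exact sub_mem me mM11w
        · by_cases hi1 : i = 1
          · subst hi1
            have z1 : G 1 1 * G 1 1 * G 1 1 - G 1 1 = 0 :=
              sub_eq_zero_of_eq (TripleMU.cube hrel' half h1p h1q)
            have key : G 1 1 * (G 1 1 * G 1 1 * G 1 c) - G 1 1 * G 1 c =
                (G 1 1 * G 1 1 * G 1 1 - G 1 1) * G 1 c := by noncomm_ring
            rw [z1] at key
            simp only [zero_mul] at key
            rw [sub_eq_zero] at key
            rw [key, eM5 1 h1q c hc (fun h => hc1 h.symm)]
            exact mM (1 + p) (c + p) (by omega) (by omega) (by omega) (by omega)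
          · have z1 : G 1 1 * G i 1 * G i 1 + G i 1 * G i 1 * G 1 1 - G 1 1 = 0 :=
              sub_eq_zero_of_eq (TripleMU.hB hrel' half hp2 hq2 hi hi1)
            have z2 : G i 1 * G 1 c = 0 :=
              TripleMU.D1 hrel' half hi h1p h1q hc hi1 (fun h => hc1 h.symm)
            have key : G i 1 * (G i 1 * G 1 1 * G 1 c) - G 1 1 * G 1 c =
                (G 1 1 * G i 1 * G i 1 + G i 1 * G i 1 * G 1 1 - G 1 1) * G 1 c
                - (G 1 1 * G i 1) * (G i 1 * G 1 c) := by noncomm_ring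
            rw [z1, z2] at key
            simp only [zero_mul, mul_zero, sub_zero, zero_sub, neg_zero] at key
            rw [sub_eq_zero] at key
            rw [key, eM5 1 h1q c hc (fun h => hc1 h.symm)]
            exact mM (1 + p) (c + p) (by omega) (by omega) (by omega) (by omega)
      · have zD3 : G i j * G i 1 - G 1 j * G 1 1 = 0 :=
          sub_eq_zero_of_eq (TripleMU.D3 hrel' half hi hj h1q hj1)
        by_cases hc1 : c = 1
        · subst hc1
          have z1 : G 1 1 * G 1 1 * G 1 1 - G 1 1 = 0 :=
            sub_eq_zero_of_eq (TripleMU.cube hrel' half h1p h1q)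
          have key : G i j * (G i 1 * G 1 1 * G 1 1) - G 1 j * G 1 1 =
              (G i j * G i 1 - G 1 j * G 1 1) * (G 1 1 * G 1 1)
              + G 1 j * (G 1 1 * G 1 1 * G 1 1 - G 1 1) := by noncomm_ring
          rw [zD3, z1] at key
          simp only [zero_mul, mul_zero, add_zero] at key
          rw [sub_eq_zero] at key
          rw [key, eM5 j hj 1 h1q hj1]
          exact mM (j + p) (1 + p) (by omega) (by omega) (by omega) (by omega)
        · by_cases hjc : j = c
          · subst hjc
            have key : G i j * (G i 1 * G 1 1 * G 1 j) - G 1 j * G 1 1 * G 1 1 * G 1 j =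
                (G i j * G i 1 - G 1 j * G 1 1) * (G 1 1 * G 1 j) := by noncomm_ring
            rw [zD3] at key
            simp only [zero_mul] at key
            rw [sub_eq_zero] at key
            rw [key, TripleMU.eA hrel' half hp2 hq2 hj hj1]
            exact sub_mem (mFc j hj) mM11w
          · have z1 : G 1 1 * G 1 1 * G 1 c + G 1 c * G 1 1 * G 1 1 - G 1 c = 0 :=
              sub_eq_zero_of_eq (TripleMU.hD hrel' half hp2 hq2 hc hc1)
            have z2 : G 1 j * G 1 c * G 1 1 = 0 :=
              TripleMU.W2 hrel' half hp2 hq2 hj hc h1q hjc hc1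
            have key : G i j * (G i 1 * G 1 1 * G 1 c) - G 1 j * G 1 c =
                (G i j * G i 1 - G 1 j * G 1 1) * (G 1 1 * G 1 c)
                + G 1 j * (G 1 1 * G 1 1 * G 1 c + G 1 c * G 1 1 * G 1 1 - G 1 c)
                - (G 1 j * G 1 c * G 1 1) * G 1 1 := by noncomm_ring
            rw [zD3, z1, z2] at key
            simp only [zero_mul, mul_zero, add_zero, zero_add, sub_zero] at key
            rw [sub_eq_zero] at key
            rw [key, eM5 j hj c hc hjc]
            exact mM (j + p) (c + p) (by omega) (by omega) (by omega) (by omega)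
    · by_cases hj1 : j = 1
      · subst hj1
        by_cases ha1 : a = 1
        · subst ha1
          have hc1 : c ≠ 1 := fun h => hn ⟨rfl, h⟩
          have hi1 : i ≠ 1 := hia
          have z1 : G 1 1 * G 1 1 * G 1 c + G 1 c * G 1 1 * G 1 1 - G 1 c = 0 :=
            sub_eq_zero_of_eq (TripleMU.hD hrel' half hp2 hq2 hc hc1)
          have z2 : G i 1 * G 1 c = 0 :=
            TripleMU.D1 hrel' half hi h1p h1q hc hi1 (fun h => hc1 h.symm)
          have key : G i 1 * (G 1 1 * G 1 1 * G 1 c) =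
              G i 1 * (G 1 1 * G 1 1 * G 1 c + G 1 c * G 1 1 * G 1 1 - G 1 c)
              - (G i 1 * G 1 c) * (G 1 1 * G 1 1) + (G i 1 * G 1 c) := by noncomm_ring
          rw [z1, z2] at key
          simp only [zero_mul, mul_zero, add_zero, sub_zero, zero_sub, neg_zero,
            zero_add] at key
          rw [key]
          exact zero_mem _
        · have key : G i 1 * (G a 1 * G 1 1 * G 1 c) =
              (G i 1 * G a 1 * G 1 1) * G 1 c := by noncomm_ring
          rw [key, TripleMU.W1 hrel' half hp2 hq2 hi ha h1p hia ha1, zero_mul]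
          exact zero_mem _
      · have key : G i j * (G a 1 * G 1 1 * G 1 c) =
            (G i j * G a 1) * (G 1 1 * G 1 c) := by noncomm_ring
        rw [key, TripleMU.D1 hrel' half hi ha hj h1q hia hj1, zero_mul]
        exact zero_mem _
  -- hU5 : G i j * (G 1 2 * G 1 2 * G 1 1)
  have hU5 : ∀ i ∈ Finset.Icc 1 p, ∀ j ∈ Finset.Icc 1 q,
      G i j * (G 1 2 * G 1 2 * G 1 1) ∈ W := by
    intro i hi j hj
    have hiI := Finset.mem_Icc.mp hi
    have hjI := Finset.mem_Icc.mp hj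
    by_cases hi1 : i = 1
    · subst hi1
      by_cases hj1 : j = 1
      · subst hj1
        have z1 : G 1 1 * G 1 2 * G 1 2 + G 1 2 * G 1 2 * G 1 1 - G 1 1 = 0 :=
          sub_eq_zero_of_eq (TripleMU.hC hrel' half hp2 hq2 h2q (by omega))
        have key : G 1 1 * (G 1 2 * G 1 2 * G 1 1)
            - (G 1 1 * G 1 1 - G 1 1 * G 1 1 * G 1 2 * G 1 2) =
            G 1 1 * (G 1 1 * G 1 2 * G 1 2 + G 1 2 * G 1 2 * G 1 1 - G 1 1) := by noncomm_ring
        rw [z1] at key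
        simp only [mul_zero] at key
        rw [sub_eq_zero] at key
        rw [key]
        exact sub_mem me mM11w
      · by_cases hj2 : j = 2
        · subst hj2
          have z1 : G 1 2 * G 1 2 * G 1 2 - G 1 2 = 0 :=
            sub_eq_zero_of_eq (TripleMU.cube hrel' half h1p h2q)
          have key : G 1 2 * (G 1 2 * G 1 2 * G 1 1) - G 1 2 * G 1 1 =
              (G 1 2 * G 1 2 * G 1 2 - G 1 2) * G 1 1 := by noncomm_ring
          rw [z1] at key
          simp only [zero_mul] at key
          rw [sub_eq_zero] at key
          rw [key, eM5 2 h2q 1 h1q (by omega)]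
          exact mM (2 + p) (1 + p) (by omega) (by omega) (by omega) (by omega)
        · have z1 : G 1 j * G 1 2 * G 1 2 - G 1 j * G 1 1 * G 1 1 = 0 :=
            sub_eq_zero_of_eq (TripleMU.W6 hrel' half hp2 hq2 hj h2q hj2 hj1)
          have z2 : G 1 1 * G 1 1 * G 1 1 - G 1 1 = 0 :=
            sub_eq_zero_of_eq (TripleMU.cube hrel' half h1p h1q)
          have key : G 1 j * (G 1 2 * G 1 2 * G 1 1) - G 1 j * G 1 1 =
              (G 1 j * G 1 2 * G 1 2 - G 1 j * G 1 1 * G 1 1) * G 1 1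
              + G 1 j * (G 1 1 * G 1 1 * G 1 1 - G 1 1) := by noncomm_ring
          rw [z1, z2] at key
          simp only [zero_mul, mul_zero, add_zero] at key
          rw [sub_eq_zero] at key
          rw [key, eM5 j hj 1 h1q hj1]
          exact mM (j + p) (1 + p) (by omega) (by omega) (by omega) (by omega)
    · by_cases hj2 : j = 2
      · subst hj2
        have z1 : G i 2 * G 1 2 - G i 1 * G 1 1 = 0 :=
          sub_eq_zero_of_eq (TripleMU.D2 hrel' half hi h1p h2q hi1)
        have z2 : G 1 1 * G 1 2 * G 1 1 = 0 :=
          TripleMU.sand0 hrel' half h1p h1p h1q h2q (by omega)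
        have key : G i 2 * (G 1 2 * G 1 2 * G 1 1) =
            (G i 2 * G 1 2 - G i 1 * G 1 1) * (G 1 2 * G 1 1)
            + G i 1 * (G 1 1 * G 1 2 * G 1 1) := by noncomm_ring
        rw [z1, z2] at key
        simp only [zero_mul, mul_zero, add_zero, zero_add] at key
        rw [key]
        exact zero_mem _
      · have key : G i j * (G 1 2 * G 1 2 * G 1 1) =
            (G i j * G 1 2) * (G 1 2 * G 1 1) := by noncomm_ring
        rw [key, TripleMU.D1 hrel' half hi h1p hj h2q hi1 hj2, zero_mul]
        exact zero_mem _
  -- hU6 : G i j * (G 1 1 * G 1 1 * G 1 2 * G 1 2)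
  have hU6 : ∀ i ∈ Finset.Icc 1 p, ∀ j ∈ Finset.Icc 1 q,
      G i j * (G 1 1 * G 1 1 * G 1 2 * G 1 2) ∈ W := by
    intro i hi j hj
    have hiI := Finset.mem_Icc.mp hi
    have hjI := Finset.mem_Icc.mp hj
    by_cases hi1 : i = 1
    · subst hi1
      by_cases hj1 : j = 1
      · subst hj1
        have z1 : G 1 1 * G 1 1 * G 1 1 - G 1 1 = 0 :=
          sub_eq_zero_of_eq (TripleMU.cube hrel' half h1p h1q)
        have z2 : G 1 1 * G 1 2 * G 1 2 + G 1 2 * G 1 2 * G 1 1 - G 1 1 = 0 :=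
          sub_eq_zero_of_eq (TripleMU.hC hrel' half hp2 hq2 h2q (by omega))
        have key : G 1 1 * (G 1 1 * G 1 1 * G 1 2 * G 1 2) - (G 1 1 - G 1 2 * G 1 2 * G 1 1) =
            (G 1 1 * G 1 1 * G 1 1 - G 1 1) * (G 1 2 * G 1 2)
            + (G 1 1 * G 1 2 * G 1 2 + G 1 2 * G 1 2 * G 1 1 - G 1 1) := by noncomm_ring
        rw [z1, z2] at key
        simp only [zero_mul, add_zero, zero_add] at key
        rw [sub_eq_zero] at key
        rw [key]
        exact sub_mem (mG 1 h1p 1 h1q) mM2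
      · by_cases hj2 : j = 2
        · subst hj2
          have z1 : G 1 1 * G 1 1 * G 1 2 + G 1 2 * G 1 1 * G 1 1 - G 1 2 = 0 :=
            sub_eq_zero_of_eq (TripleMU.hD hrel' half hp2 hq2 h2q (by omega))
          have z2 : G 1 2 * G 1 2 * G 1 2 - G 1 2 = 0 :=
            sub_eq_zero_of_eq (TripleMU.cube hrel' half h1p h2q)
          have key : G 1 2 * (G 1 1 * G 1 1 * G 1 2 * G 1 2) - (G 1 2 - G 1 1 * G 1 1 * G 1 2) =
              G 1 2 * (G 1 1 * G 1 1 * G 1 2 + G 1 2 * G 1 1 * G 1 1 - G 1 2) * G 1 2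
              - (G 1 2 * G 1 2) * (G 1 1 * G 1 1 * G 1 2 + G 1 2 * G 1 1 * G 1 1 - G 1 2)
              + (G 1 2 * G 1 2 * G 1 2 - G 1 2) * (G 1 1 * G 1 1)
              + (G 1 1 * G 1 1 * G 1 2 + G 1 2 * G 1 1 * G 1 1 - G 1 2) := by noncomm_ring
          rw [z1, z2] at key
          simp only [zero_mul, mul_zero, add_zero, zero_add, sub_zero, zero_sub,
            neg_zero] at key
          rw [sub_eq_zero] at key
          rw [key]
          refine sub_mem (mG 1 h1p 2 h2q) ?_
          rw [eM3 1 h1p 2 h2q (by omega)]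
          exact mM 1 (2 + p) (by omega) (by omega) (by omega) (by omega)
        · have z1 : G 1 1 * G 1 1 * G 1 2 + G 1 2 * G 1 1 * G 1 1 - G 1 2 = 0 :=
            sub_eq_zero_of_eq (TripleMU.hD hrel' half hp2 hq2 h2q (by omega))
          have z2 : G 1 j * G 1 2 * G 1 1 = 0 :=
            TripleMU.W2 hrel' half hp2 hq2 hj h2q h1q hj2 (by omega)
          have z3 : G 1 j * G 1 2 * G 1 2 - G 1 j * G 1 1 * G 1 1 = 0 :=
            sub_eq_zero_of_eq (TripleMU.W6 hrel' half hp2 hq2 hj h2q hj2 hj1)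
          have z4 : G 1 1 * G 1 1 * G 1 j + G 1 j * G 1 1 * G 1 1 - G 1 j = 0 :=
            sub_eq_zero_of_eq (TripleMU.hD hrel' half hp2 hq2 hj hj1)
          have key : G 1 j * (G 1 1 * G 1 1 * G 1 2 * G 1 2) - (G 1 j - G 1 1 * G 1 1 * G 1 j) =
              G 1 j * (G 1 1 * G 1 1 * G 1 2 + G 1 2 * G 1 1 * G 1 1 - G 1 2) * G 1 2
              - (G 1 j * G 1 2 * G 1 1) * (G 1 1 * G 1 2)
              + (G 1 j * G 1 2 * G 1 2 - G 1 j * G 1 1 * G 1 1)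
              + (G 1 1 * G 1 1 * G 1 j + G 1 j * G 1 1 * G 1 1 - G 1 j) := by noncomm_ring
          rw [z1, z2, z3, z4] at key
          simp only [zero_mul, mul_zero, add_zero, zero_add, sub_zero, zero_sub,
            neg_zero] at key
          rw [sub_eq_zero] at key
          rw [key]
          refine sub_mem (mG 1 h1p j hj) ?_
          rw [eM3 1 h1p j hj (fun hx => hj1 hx.2)]
          exact mM 1 (j + p) (by omega) (by omega) (by omega) (by omega)
    · by_cases hj1 : j = 1
      · subst hj1
        have z1 : G 1 1 * G 1 1 * G 1 2 + G 1 2 * G 1 1 * G 1 1 - G 1 2 = 0 :=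
          sub_eq_zero_of_eq (TripleMU.hD hrel' half hp2 hq2 h2q (by omega))
        have z2 : G i 1 * G 1 2 = 0 :=
          TripleMU.D1 hrel' half hi h1p h1q h2q hi1 (by omega)
        have key : G i 1 * (G 1 1 * G 1 1 * G 1 2 * G 1 2) =
            G i 1 * (G 1 1 * G 1 1 * G 1 2 + G 1 2 * G 1 1 * G 1 1 - G 1 2) * G 1 2
            + (G i 1 * G 1 2) * G 1 2
            - (G i 1 * G 1 2) * (G 1 1 * G 1 1 * G 1 2) := by noncomm_ring
        rw [z1, z2] at key
        simp only [zero_mul, mul_zero, add_zero, zero_add, sub_zero, zero_sub,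
          neg_zero] at key
        rw [key]
        exact zero_mem _
      · have key : G i j * (G 1 1 * G 1 1 * G 1 2 * G 1 2) =
            (G i j * G 1 1) * (G 1 1 * G 1 2 * G 1 2) := by noncomm_ring
        rw [key, TripleMU.D1 hrel' half hi h1p hj h1q hi1 hj1, zero_mul]
        exact zero_mem _
  -- hU7 : G i j * (G a 1 * G a 1)
  have hU7 : ∀ a ∈ Finset.Icc 1 p, ∀ i ∈ Finset.Icc 1 p, ∀ j ∈ Finset.Icc 1 q,
      G i j * (G a 1 * G a 1) ∈ W := by
    intro a ha i hi j hj
    have haI := Finset.mem_Icc.mp ha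
    have hiI := Finset.mem_Icc.mp hi
    have hjI := Finset.mem_Icc.mp hj
    by_cases hia : i = a
    · subst hia
      by_cases hj1 : j = 1
      · subst hj1
        have z1 : G i 1 * G i 1 * G i 1 - G i 1 = 0 :=
          sub_eq_zero_of_eq (TripleMU.cube hrel' half hi h1q)
        have key : G i 1 * (G i 1 * G i 1) - G i 1 =
            G i 1 * G i 1 * G i 1 - G i 1 := by noncomm_ring
        rw [z1] at key
        rw [sub_eq_zero] at key
        rw [key]
        exact mG i hi 1 h1q
      · have z1 : G i j * G i 1 * G i 1 + G i 1 * G i 1 * G i j - G i j = 0 :=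
          sub_eq_zero_of_eq (TripleMU.hA hrel' half hp2 hq2 hi hj hj1)
        have z2 : G i 1 * G i j - G 1 1 * G 1 j = 0 :=
          sub_eq_zero_of_eq (TripleMU.D3 hrel' half hi h1q hj (fun h => hj1 h.symm))
        have key : G i j * (G i 1 * G i 1) - (G i j - G i 1 * G 1 1 * G 1 j) =
            (G i j * G i 1 * G i 1 + G i 1 * G i 1 * G i j - G i j)
            - G i 1 * (G i 1 * G i j - G 1 1 * G 1 j) := by noncomm_ring
        rw [z1, z2] at key
        simp only [mul_zero, sub_zero, zero_sub, neg_zero] at key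
        rw [sub_eq_zero] at key
        rw [key]
        refine sub_mem (mG i hi j hj) ?_
        rw [eM3 i hi j hj (fun hx => hj1 hx.2)]
        exact mM i (j + p) (by omega) (by omega) (by omega) (by omega)
    · by_cases hj1 : j = 1
      · subst hj1
        by_cases ha1 : a = 1
        · subst ha1
          have hi1 : i ≠ 1 := hia
          rw [← mul_assoc, eM3 i hi 1 h1q (fun hx => hi1 hx.1)]
          exact mM i (1 + p) (by omega) (by omega) (by omega) (by omega)
        · by_cases hi1 : i = 1
          · subst hi1
            rw [← mul_assoc, TripleMU.W4 hrel' half hp2 hq2 ha ha1, eM2]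
            exact mM 1 (p + 1) (by omega) (by omega) (by omega) (by omega)
          · rw [← mul_assoc, TripleMU.W3 hrel' half hp2 hq2 hi ha hia hi1,
              eM3 i hi 1 h1q (fun hx => hi1 hx.1)]
            exact mM i (1 + p) (by omega) (by omega) (by omega) (by omega)
      · rw [← mul_assoc, TripleMU.D1 hrel' half hi ha hj h1q hia hj1, zero_mul]
        exact zero_mem _
  -- hU8 : G i j * (G 1 c * G 1 c)
  have hU8 : ∀ c ∈ Finset.Icc 1 q, ∀ i ∈ Finset.Icc 1 p, ∀ j ∈ Finset.Icc 1 q,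
      G i j * (G 1 c * G 1 c) ∈ W := by
    intro c hc i hi j hj
    have hcI := Finset.mem_Icc.mp hc
    have hiI := Finset.mem_Icc.mp hi
    have hjI := Finset.mem_Icc.mp hj
    by_cases hjc : j = c
    · subst hjc
      by_cases hi1 : i = 1
      · subst hi1
        have z1 : G 1 j * G 1 j * G 1 j - G 1 j = 0 :=
          sub_eq_zero_of_eq (TripleMU.cube hrel' half h1p hj)
        have key : G 1 j * (G 1 j * G 1 j) - G 1 j =
            G 1 j * G 1 j * G 1 j - G 1 j := by noncomm_ring
        rw [z1] at key
        rw [sub_eq_zero] at key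
        rw [key]
        exact mG 1 h1p j hj
      · have z1 : G i j * G 1 j - G i 1 * G 1 1 = 0 :=
          sub_eq_zero_of_eq (TripleMU.D2 hrel' half hi h1p hj hi1)
        have key : G i j * (G 1 j * G 1 j) - G i 1 * G 1 1 * G 1 j =
            (G i j * G 1 j - G i 1 * G 1 1) * G 1 j := by noncomm_ring
        rw [z1] at key
        simp only [zero_mul] at key
        rw [sub_eq_zero] at key
        rw [key, eM3 i hi j hj (fun hx => hi1 hx.1)]
        exact mM i (j + p) (by omega) (by omega) (by omega) (by omega)
    · by_cases hi1 : i = 1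
      · subst hi1
        by_cases hc1 : c = 1
        · subst hc1
          have hj1 : j ≠ 1 := hjc
          have z1 : G 1 1 * G 1 1 * G 1 j + G 1 j * G 1 1 * G 1 1 - G 1 j = 0 :=
            sub_eq_zero_of_eq (TripleMU.hD hrel' half hp2 hq2 hj hj1)
          have key : G 1 j * (G 1 1 * G 1 1) - (G 1 j - G 1 1 * G 1 1 * G 1 j) =
              G 1 1 * G 1 1 * G 1 j + G 1 j * G 1 1 * G 1 1 - G 1 j := by noncomm_ring
          rw [z1] at key
          rw [sub_eq_zero] at key
          rw [key]
          refine sub_mem (mG 1 h1p j hj) ?_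
          rw [eM3 1 h1p j hj (fun hx => hj1 hx.2)]
          exact mM 1 (j + p) (by omega) (by omega) (by omega) (by omega)
        · by_cases hj1 : j = 1
          · subst hj1
            have z1 : G 1 1 * G 1 c * G 1 c - G 2 1 * G 2 1 * G 1 1 = 0 :=
              sub_eq_zero_of_eq (TripleMU.W5 hrel' half hp2 hq2 hc hc1)
            have z2 : G 1 1 * G 2 1 * G 2 1 + G 2 1 * G 2 1 * G 1 1 - G 1 1 = 0 :=
              sub_eq_zero_of_eq (TripleMU.hB hrel' half hp2 hq2 h2p (by omega))
            have z3 : G 1 2 * G 1 2 * G 1 1 - G 1 1 * G 2 1 * G 2 1 = 0 :=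
              sub_eq_zero_of_eq (TripleMU.W7 hrel' half hp2 hq2)
            have key : G 1 1 * (G 1 c * G 1 c) - (G 1 1 - G 1 2 * G 1 2 * G 1 1) =
                (G 1 1 * G 1 c * G 1 c - G 2 1 * G 2 1 * G 1 1)
                + (G 1 1 * G 2 1 * G 2 1 + G 2 1 * G 2 1 * G 1 1 - G 1 1)
                + (G 1 2 * G 1 2 * G 1 1 - G 1 1 * G 2 1 * G 2 1) := by noncomm_ring
            rw [z1, z2, z3] at key
            simp only [add_zero, zero_add, sub_zero, zero_sub, neg_zero] at key
            rw [sub_eq_zero] at key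
            rw [key]
            exact sub_mem (mG 1 h1p 1 h1q) mM2
          · have z1 : G 1 j * G 1 c * G 1 c - G 1 j * G 1 1 * G 1 1 = 0 :=
              sub_eq_zero_of_eq (TripleMU.W6 hrel' half hp2 hq2 hj hc hjc hj1)
            have z2 : G 1 1 * G 1 1 * G 1 j + G 1 j * G 1 1 * G 1 1 - G 1 j = 0 :=
              sub_eq_zero_of_eq (TripleMU.hD hrel' half hp2 hq2 hj hj1)
            have key : G 1 j * (G 1 c * G 1 c) - (G 1 j - G 1 1 * G 1 1 * G 1 j) =
                (G 1 j * G 1 c * G 1 c - G 1 j * G 1 1 * G 1 1)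
                + (G 1 1 * G 1 1 * G 1 j + G 1 j * G 1 1 * G 1 1 - G 1 j) := by noncomm_ring
            rw [z1, z2] at key
            simp only [add_zero, zero_add] at key
            rw [sub_eq_zero] at key
            rw [key]
            refine sub_mem (mG 1 h1p j hj) ?_
            rw [eM3 1 h1p j hj (fun hx => hj1 hx.2)]
            exact mM 1 (j + p) (by omega) (by omega) (by omega) (by omega)
      · rw [← mul_assoc, TripleMU.D1 hrel' half hi h1p hj hc hi1 hjc, zero_mul]
        exact zero_mem _
  -- multiplication of a generator with any M
  have mulM : ∀ i ∈ Finset.Icc 1 p, ∀ j ∈ Finset.Icc 1 q, ∀ a ∈ Finset.Icc 1 (p + q),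
      ∀ b ∈ Finset.Icc 1 (p + q), G i j * M a b ∈ W := by
    intro i hi j hj
    have lowhigh : ∀ a ∈ Finset.Icc 1 p, ∀ b ∈ Finset.Icc (p + 1) (p + q),
        G i j * M a b ∈ W := by
      intro a ha b hb
      have hbI := Finset.mem_Icc.mp hb
      by_cases hb' : (a, b) = (1, p + 1)
      · have ha1 : a = 1 := congrArg Prod.fst hb'
        have hb1 : b = p + 1 := congrArg Prod.snd hb'
        subst ha1; subst hb1
        rw [hM2]
        exact hU5 i hi j hj
      · rw [hM3 a ha b hb hb']
        have hc : b - p ∈ Finset.Icc 1 q := TripleMU.memIcc (by omega) (by omega)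
        refine hU4 a ha (b - p) hc ?_ i hi j hj
        intro hx
        apply hb'
        have hb1 : b = p + 1 := by omega
        rw [hx.1, hb1]
    intro a ha b hb
    have haI := Finset.mem_Icc.mp ha
    have hbI := Finset.mem_Icc.mp hb
    by_cases hap : a ≤ p
    · have ha' : a ∈ Finset.Icc 1 p := TripleMU.memIcc (by omega) hap
      by_cases hbp : b ≤ p
      · have hb' : b ∈ Finset.Icc 1 p := TripleMU.memIcc (by omega) hbp
        by_cases hab : a = b
        · subst hab
          by_cases ha1 : a = 1
          · subst ha1
            rw [hM6]
            exact hU6 i hi j hj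
          · rw [hM7 a (Finset.mem_Icc.mpr ⟨by omega, hap⟩),
              TripleMU.E0 hrel' half hp2 hq2, mul_add, mul_neg, mul_sub]
            exact add_mem (neg_mem (sub_mem (hU8 1 h1q i hi j hj) (hU6 i hi j hj)))
              (hU7 a ha' i hi j hj)
        · rw [hM1 a ha' b hb' hab]
          exact hU2 a ha' b hb' hab i hi j hj
      · exact lowhigh a ha' b (Finset.mem_Icc.mpr ⟨by omega, hbI.2⟩)
    · have ha' : a ∈ Finset.Icc (p + 1) (p + q) := Finset.mem_Icc.mpr ⟨by omega, haI.2⟩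
      by_cases hbp : b ≤ p
      · have hb' : b ∈ Finset.Icc 1 p := TripleMU.memIcc (by omega) hbp
        rw [hM4 a ha' b hb', mul_add, mul_neg]
        refine add_mem (neg_mem (lowhigh b hb' a ha')) ?_
        exact hU1 b hb' (a - p) (TripleMU.memIcc (by omega) (by omega)) i hi j hj
      · by_cases hab : a = b
        · subst hab
          rw [hM8 a ha', mul_add, mul_neg]
          exact add_mem (neg_mem (hU6 i hi j hj))
            (hU8 (a - p) (TripleMU.memIcc (by omega) (by omega)) i hi j hj)
        · rw [hM5 a ha' b (Finset.mem_Icc.mpr ⟨by omega, hbI.2⟩) hab]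
          exact hU3 (a - p) (TripleMU.memIcc (by omega) (by omega))
            (b - p) (TripleMU.memIcc (by omega) (by omega)) (by omega) i hi j hj
  -- left multiplication by a generator preserves W
  have hmulW : ∀ i ∈ Finset.Icc 1 p, ∀ j ∈ Finset.Icc 1 q, ∀ x ∈ W, G i j * x ∈ W := by
    intro i hi j hj x hx
    induction hx using Submodule.span_induction with
    | mem t ht =>
      obtain ⟨a, ha, b, hb, rfl⟩ := ht
      exact mulM i hi j hj a ha b hb
    | zero => rw [mul_zero]; exact zero_mem _
    | add x y hx hy ihx ihy => rw [mul_add]; exact add_mem ihx ihy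
    | smul r x hx ihx => rw [mul_smul_comm]; exact Submodule.smul_mem _ _ ihx
  -- the subsemigroup of elements of W whose left multiples stay in W
  intro x hx
  have hx' : x ∈ Submodule.span F
      (↑(Subsemigroup.closure
        {a : A | ∃ i ∈ Finset.Icc 1 p, ∃ j ∈ Finset.Icc 1 q, a = G i j}) : Set A) := by
    have hh := NonUnitalAlgebra.adjoin_eq_span (R := F)
      {a : A | ∃ i ∈ Finset.Icc 1 p, ∃ j ∈ Finset.Icc 1 q, a = G i j}
    have : x ∈ (NonUnitalAlgebra.adjoin F
        {a : A | ∃ i ∈ Finset.Icc 1 p, ∃ j ∈ Finset.Icc 1 q, a = G i j}).toSubmodule := hx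
    rw [hh] at this
    exact this
  have U : Subsemigroup A :=
    { carrier := {x : A | x ∈ W ∧ ∀ y ∈ W, x * y ∈ W}
      mul_mem' := by
        rintro x y ⟨hxW, hxM⟩ ⟨hyW, hyM⟩
        exact ⟨hxM y hyW, fun z hz => by rw [mul_assoc]; exact hxM _ (hyM z hz)⟩ }
  refine Submodule.span_le.mpr ?_ hx'
  intro y hy
  have hSU : {a : A | ∃ i ∈ Finset.Icc 1 p, ∃ j ∈ Finset.Icc 1 q, a = G i j} ⊆
      {x : A | x ∈ W ∧ ∀ y ∈ W, x * y ∈ W} := by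
    rintro s ⟨i, hi, j, hj, rfl⟩
    exact ⟨mG i hi j hj, fun y hy => hmulW i hi j hj y hy⟩
  let U : Subsemigroup A :=
    { carrier := {x : A | x ∈ W ∧ ∀ y ∈ W, x * y ∈ W}
      mul_mem' := by
        rintro x y ⟨hxW, hxM⟩ ⟨hyW, hyM⟩
        exact ⟨hxM y hyW, fun z hz => by rw [mul_assoc]; exact hxM _ (hyM z hz)⟩ }
  have := (Subsemigroup.closure_le (S := U)).mpr hSU hy
  exact this.1
end
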